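/- arXiv:2504.21058 — 10 statements merged into one kernel-verified Lean document; each statement's English description precedes it below -/
import Mathlib

section
/- Let n ≥ 1 and g ≥ 1 be integers. The symplectic group Sp_{2g}(ℤ/nℤ) is generated by the matrices B_g(A) for A ∈ GL_g(ℤ/nℤ), the matrices S_g(C) for C ∈ M_g(ℤ/nℤ) symmetric, and the matrix H_g. -/
/-!
Write a symplectic matrix as `M = [[A, B], [C, D]]`. If `A` is invertible, then
`M = S(C A⁻¹) · B(A) · U(A⁻¹ B)` with `U(X) = [[1, X], [0, 1]] = H · S(-X) · H⁻¹`, a product of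
generators. In general the first block row `(A, B)` of `M` is unimodular with `A Bᵀ` symmetric,
and over any commutative artinian ring, such as `ℤ/nℤ`, this yields a symmetric `S` with
`A + B S` invertible; then `M = (M · S(S)) · S(-S)` reduces to the first case.
To find `S`, pass to the quotient by the Jacobson radical (units lift), a finite product of fields.
Over a field, invertible changes of coordinates turn `B` into a symmetric idempotent `E`, and
`S = E - A E` works.
-/

theorem IsIdempotentElem.mul_eq_one_of_mul_add_mul_eq_one {R : Type*} [Ring R] {a e p q : R}
    (he : IsIdempotentElem e) (hae : e * a * e = a * e) (h : a * p + e * q = 1) :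
    (a + e * (e - a * e)) * (p - e * (p - q - a * e * p)) = 1 := by
  have he' : ∀ x, e * (e * x) = e * x := fun x => by rw [← mul_assoc, he.eq]
  have hae' : ∀ x, e * (a * (e * x)) = a * (e * x) := fun x => by
    rw [← mul_assoc, ← mul_assoc, ← mul_assoc, hae]
  have hap : a * p = 1 - e * q := eq_sub_of_add_eq h
  rw [mul_assoc] at hae
  simp only [mul_sub, add_mul, sub_mul, mul_assoc, he', hae, hae', he.eq, hap]
  abel

namespace Matrix

section Pivot

variable {ι R : Type*} [Fintype ι] [DecidableEq ι] [CommRing R]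

def IsUnimodularSymmetricPair (A B : Matrix ι ι R) : Prop :=
  A * Bᵀ = B * Aᵀ ∧ ∃ P Q : Matrix ι ι R, A * P + B * Q = 1

def HasSymmetricPivot (A B : Matrix ι ι R) : Prop :=
  ∃ S : Matrix ι ι R, S.IsSymm ∧ IsUnit (A + B * S)

variable (ι R) in
def SymmetricPivotProperty : Prop :=
  ∀ A B : Matrix ι ι R, IsUnimodularSymmetricPair A B → HasSymmetricPivot A B

variable {A B V U : Matrix ι ι R}

theorem IsUnimodularSymmetricPair.mul_mul (h : IsUnimodularSymmetricPair A B) (hV : IsUnit V)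
    (hU : IsUnit U) : IsUnimodularSymmetricPair (V * A * U⁻¹ᵀ) (V * B * U) := by
  have := hV.invertible
  have := hU.invertible
  obtain ⟨hsymm, P, Q, hPQ⟩ := h
  refine ⟨?_, Uᵀ * P * V⁻¹, U⁻¹ * Q * V⁻¹, ?_⟩
  · simp only [transpose_mul, transpose_nonsing_inv, transpose_transpose, mul_assoc,
      inv_mul_cancel_left_of_invertible, mul_inv_cancel_left_of_invertible]
    simp only [← mul_assoc, hsymm]
  · simp only [mul_assoc, transpose_nonsing_inv, inv_mul_cancel_left_of_invertible,
      mul_inv_cancel_left_of_invertible]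
    rw [← mul_add, ← mul_assoc A, ← mul_assoc B, ← add_mul, hPQ, one_mul, mul_inv_of_invertible]

theorem HasSymmetricPivot.mul_mul (h : HasSymmetricPivot A B) (hV : IsUnit V) (hU : IsUnit U) :
    HasSymmetricPivot (V * A * U⁻¹ᵀ) (V * B * U) := by
  have := hU.invertible
  obtain ⟨S, hS, hunit⟩ := h
  refine ⟨U⁻¹ * S * U⁻¹ᵀ, ?_, ?_⟩
  · simp only [IsSymm, transpose_mul, transpose_transpose, hS.eq, mul_assoc]
  · have : V * A * U⁻¹ᵀ + V * B * U * (U⁻¹ * S * U⁻¹ᵀ) = V * (A + B * S) * U⁻¹ᵀ := by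
      simp only [mul_assoc, mul_inv_cancel_left_of_invertible, mul_add, add_mul]
    rw [this]
    exact (hV.mul hunit).mul ((isUnit_transpose _).mpr (isUnit_nonsing_inv_iff.mpr hU))

theorem IsUnimodularSymmetricPair.hasSymmetricPivot_of_isIdempotentElem {E : Matrix ι ι R}
    (h : IsUnimodularSymmetricPair A E) (hE : IsIdempotentElem E) (hEs : E.IsSymm) :
    HasSymmetricPivot A E := by
  obtain ⟨hsymm, P, Q, hPQ⟩ := h
  rw [hEs.eq] at hsymm
  have hAE : (A * E)ᵀ = A * E := by rw [transpose_mul, hEs.eq, hsymm]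
  have hEAE : E * A * E = A * E := by rw [mul_assoc, hsymm, ← mul_assoc, hE.eq]
  refine ⟨E - A * E, ?_, IsUnit.of_mul_eq_one _ (hE.mul_eq_one_of_mul_add_mul_eq_one hEAE hPQ)⟩
  rw [IsSymm, transpose_sub, hAE, hEs.eq]

theorem SymmetricPivotProperty.of_field (K : Type*) [Field K] : SymmetricPivotProperty ι K := by
  intro A B hAB
  obtain ⟨V, U, e, hV, hU, hE⟩ := exists_rank_normal_form B
  set E := (fromBlocks 1 0 0 0 : Matrix _ _ K).submatrix e e
  have hEidem : IsIdempotentElem E := by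
    rw [IsIdempotentElem, submatrix_mul_equiv, fromBlocks_multiply]
    simp [E]
  have hEsymm : E.IsSymm :=
    (isSymm_fromBlocks_iff.mpr ⟨isSymm_one, by simp, by simp, isSymm_zero⟩).submatrix e
  have hpair := hAB.mul_mul hV hU
  rw [hE] at hpair
  have hpivot := (hpair.hasSymmetricPivot_of_isIdempotentElem hEidem hEsymm).mul_mul
    (isUnit_nonsing_inv_iff.mpr hV) (isUnit_nonsing_inv_iff.mpr hU)
  have := hV.invertible
  have := hU.invertible
  rw [← hE] at hpivot
  simpa [mul_assoc, ← transpose_mul] using hpivot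

theorem IsUnimodularSymmetricPair.map {S : Type*} [CommRing S]
    (h : IsUnimodularSymmetricPair A B) (f : R →+* S) :
    IsUnimodularSymmetricPair (f.mapMatrix A) (f.mapMatrix B) := by
  have hT : ∀ M : Matrix ι ι R, f.mapMatrix Mᵀ = (f.mapMatrix M)ᵀ := fun M => transpose_map.symm
  obtain ⟨hsymm, P, Q, hPQ⟩ := h
  refine ⟨?_, f.mapMatrix P, f.mapMatrix Q, ?_⟩
  · rw [← hT, ← hT, ← map_mul, ← map_mul, hsymm]
  · rw [← map_mul, ← map_mul, ← map_add, hPQ, map_one]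

theorem SymmetricPivotProperty.of_surjective {S : Type*} [CommRing S] (f : R →+* S)
    [IsLocalHom f] (hf : Function.Surjective f) (h : SymmetricPivotProperty ι S) :
    SymmetricPivotProperty ι R := by
  intro A B hAB
  obtain ⟨T, hT, hunit⟩ := h _ _ (hAB.map f)
  have hlift : f.mapMatrix (T.map (Function.surjInv hf)) = T := by
    ext i j
    exact Function.surjInv_eq hf _
  refine ⟨T.map (Function.surjInv hf), hT.map _, ?_⟩
  rw [isUnit_iff_isUnit_det] at hunit ⊢
  refine IsUnit.of_map f _ ?_
  rwa [RingHom.map_det, map_add, map_mul, hlift]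

theorem SymmetricPivotProperty.pi {κ : Type*} {K : κ → Type*} [∀ i, CommRing (K i)]
    (h : ∀ i, SymmetricPivotProperty ι (K i)) : SymmetricPivotProperty ι (∀ i, K i) := by
  intro A B hAB
  choose T hT hunit using fun i => h i _ _ (hAB.map (Pi.evalRingHom K i))
  set S : Matrix ι ι (∀ i, K i) := of fun a b i => T i a b
  have hS : ∀ i, (Pi.evalRingHom K i).mapMatrix S = T i := fun i => rfl
  refine ⟨S, ?_, ?_⟩
  · ext a b i
    exact congr_fun (congr_fun (hT i) a) b
  · rw [isUnit_iff_isUnit_det, Pi.isUnit_iff]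
    intro i
    change IsUnit (Pi.evalRingHom K i (A + B * S).det)
    rw [RingHom.map_det, map_add, map_mul, hS, ← isUnit_iff_isUnit_det]
    exact hunit i

theorem SymmetricPivotProperty.of_isArtinianRing [IsArtinianRing R] :
    SymmetricPivotProperty ι R := by
  set I := Ideal.jacobson (⊥ : Ideal R) with hI
  have := isLocalHom_of_le_jacobson_bot I le_rfl
  have : IsReduced (R ⧸ I) := (Ideal.isRadical_iff_quotient_reduced I).mp <| by
    rw [hI, IsArtinianRing.jacobson_eq_radical]
    exact Ideal.radical_isRadical ⊥
  refine .of_surjective (Ideal.Quotient.mk I) Ideal.Quotient.mk_surjective ?_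
  let e := (IsArtinianRing.equivPi (R ⧸ I)).toRingEquiv
  have : IsLocalHom e.toRingHom := ⟨fun a ha => by simpa using ha.map e.symm⟩
  refine .of_surjective e.toRingHom e.surjective (.pi fun m => ?_)
  have := m.isMaximal
  let := Ideal.Quotient.field m.asIdeal
  exact SymmetricPivotProperty.of_field _

end Pivot

section Symplectic

variable (l R : Type*) [Fintype l] [DecidableEq l] [CommRing R]

def symplecticGenerators : Set (Matrix (l ⊕ l) (l ⊕ l) R) :=
  {M | ∃ A : GL l R, M = fromBlocks (A : Matrix l l R) 0 0 (↑A⁻¹ : Matrix l l R)ᵀ} ∪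
    {M | ∃ C : Matrix l l R, C.IsSymm ∧ M = fromBlocks 1 0 C 1} ∪
    {fromBlocks 0 1 (-1) 0}

variable {l R}

theorem coe_symplecticGroup :
    (symplecticGroup l R : Set (Matrix (l ⊕ l) (l ⊕ l) R)) =
      {M | Mᵀ * fromBlocks 0 1 (-1) 0 * M = fromBlocks 0 1 (-1) 0} := by
  have hJ : fromBlocks (0 : Matrix l l R) 1 (-1) 0 = -J l R := by simp [J, fromBlocks_neg]
  ext M
  simp [hJ, SymplecticGroup.mem_iff']

theorem symplecticGenerators_subset : symplecticGenerators l R ⊆ symplecticGroup l R := by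
  rintro M ((⟨A, rfl⟩ | ⟨C, hC, rfl⟩) | rfl)
  · rw [SetLike.mem_coe, SymplecticGroup.fromBlocks_mem_iff]
    refine ⟨by simp, by simp, ?_⟩
    rw [← transpose_mul, A.inv_mul]
    simp
  · rw [SetLike.mem_coe, SymplecticGroup.fromBlocks_mem_iff]
    simp [hC.eq]
  · rw [SetLike.mem_coe, SymplecticGroup.fromBlocks_mem_iff]
    simp

theorem lower_fromBlocks_mem_closure {C : Matrix l l R} (hC : C.IsSymm) :
    fromBlocks 1 0 C 1 ∈ Submonoid.closure (symplecticGenerators l R) :=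
  Submonoid.subset_closure (Or.inl (Or.inr ⟨C, hC, rfl⟩))

theorem upper_fromBlocks_mem_closure {B : Matrix l l R} (hB : B.IsSymm) :
    fromBlocks 1 B 0 1 ∈ Submonoid.closure (symplecticGenerators l R) := by
  -- `H ^ 3 = H⁻¹`
  set H : Matrix (l ⊕ l) (l ⊕ l) R := fromBlocks 0 1 (-1) 0
  have hH : H ∈ Submonoid.closure (symplecticGenerators l R) :=
    Submonoid.subset_closure (Or.inr rfl)
  have : fromBlocks 1 B 0 1 = H * fromBlocks 1 0 (-B) 1 * H ^ 3 := by
    simp [H, pow_succ, fromBlocks_multiply]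
  rw [this]
  exact mul_mem (mul_mem hH (lower_fromBlocks_mem_closure hB.neg)) (pow_mem hH 3)

variable {A B C D : Matrix l l R}

theorem isUnimodularSymmetricPair_of_fromBlocks_mem
    (hM : fromBlocks A B C D ∈ symplecticGroup l R) : IsUnimodularSymmetricPair A B := by
  have := SymplecticGroup.transpose_mem hM
  rw [fromBlocks_transpose, SymplecticGroup.fromBlocks_mem_iff] at this
  obtain ⟨hAB, -, hAD⟩ := this
  simp only [transpose_transpose] at hAB hAD
  exact ⟨hAB, Dᵀ, -Cᵀ, by rw [mul_neg, ← sub_eq_add_neg, hAD]⟩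

theorem fromBlocks_eq_mul_mul_of_mem_symplecticGroup (hA : IsUnit A)
    (hM : fromBlocks A B C D ∈ symplecticGroup l R) :
    (C * A⁻¹).IsSymm ∧ (A⁻¹ * B).IsSymm ∧
      fromBlocks A B C D = fromBlocks 1 0 (C * A⁻¹) 1 * fromBlocks A 0 0 A⁻¹ᵀ *
        fromBlocks 1 (A⁻¹ * B) 0 1 := by
  have := hA.invertible
  obtain ⟨hAC, -, hAD⟩ := SymplecticGroup.fromBlocks_mem_iff.mp hM
  have hAB := (isUnimodularSymmetricPair_of_fromBlocks_mem hM).1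
  have hinvT : A⁻¹ᵀ * Aᵀ = 1 := by rw [← transpose_mul, mul_inv_of_invertible, transpose_one]
  have hTinv : Aᵀ * A⁻¹ᵀ = 1 := by rw [← transpose_mul, inv_mul_of_invertible, transpose_one]
  have hK : (C * A⁻¹).IsSymm := by
    calc (C * A⁻¹)ᵀ = A⁻¹ᵀ * (Cᵀ * A) * A⁻¹ := by
          rw [transpose_mul, mul_assoc, mul_assoc, mul_inv_of_invertible, mul_one]
      _ = C * A⁻¹ := by rw [← hAC, ← mul_assoc, hinvT, one_mul]
  have hX : (A⁻¹ * B).IsSymm := by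
    calc (A⁻¹ * B)ᵀ = A⁻¹ * (A * Bᵀ) * A⁻¹ᵀ := by
          rw [transpose_mul, inv_mul_cancel_left_of_invertible]
      _ = A⁻¹ * B := by rw [hAB, mul_assoc, mul_assoc, hTinv, mul_one]
  have hD : D = C * A⁻¹ * B + A⁻¹ᵀ := by
    calc D = A⁻¹ᵀ * (Aᵀ * D - Cᵀ * B) + A⁻¹ᵀ * Cᵀ * B := by
          rw [mul_sub, ← mul_assoc, hinvT, one_mul, mul_assoc, sub_add_cancel]
      _ = C * A⁻¹ * B + A⁻¹ᵀ := by rw [hAD, mul_one, ← transpose_mul, hK.eq, add_comm]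
  refine ⟨hK, hX, ?_⟩
  simp only [fromBlocks_multiply, mul_one, one_mul, mul_zero, zero_mul, add_zero, zero_add,
    mul_inv_cancel_left_of_invertible]
  rw [inv_mul_cancel_right_of_invertible, hD, mul_assoc]

theorem fromBlocks_mem_closure_of_isUnit (hA : IsUnit A)
    (hM : fromBlocks A B C D ∈ symplecticGroup l R) :
    fromBlocks A B C D ∈ Submonoid.closure (symplecticGenerators l R) := by
  obtain ⟨hK, hX, hdecomp⟩ := fromBlocks_eq_mul_mul_of_mem_symplecticGroup hA hM
  obtain ⟨u, rfl⟩ := hA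
  have hdiag : fromBlocks (u : Matrix l l R) 0 0 (u : Matrix l l R)⁻¹ᵀ ∈
      Submonoid.closure (symplecticGenerators l R) :=
    Submonoid.subset_closure (Or.inl (Or.inl ⟨u, by rw [coe_units_inv]⟩))
  rw [hdecomp]
  exact mul_mem (mul_mem (lower_fromBlocks_mem_closure hK) hdiag)
    (upper_fromBlocks_mem_closure hX)

theorem closure_symplecticGenerators (h : SymmetricPivotProperty l R) :
    Submonoid.closure (symplecticGenerators l R) = symplecticGroup l R := by
  refine le_antisymm (Submonoid.closure_le.mpr symplecticGenerators_subset) fun M hM => ?_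
  obtain ⟨A, B, C, D, rfl⟩ : ∃ A B C D, M = fromBlocks A B C D :=
    ⟨_, _, _, _, (fromBlocks_toBlocks M).symm⟩
  obtain ⟨S, hS, hunit⟩ := h _ _ (isUnimodularSymmetricPair_of_fromBlocks_mem hM)
  have hMS : fromBlocks A B C D * fromBlocks 1 0 S 1 = fromBlocks (A + B * S) B (C + D * S) D := by
    simp [fromBlocks_multiply]
  have hcancel : fromBlocks 1 0 S 1 * fromBlocks 1 0 (-S) 1 = (1 : Matrix (l ⊕ l) (l ⊕ l) R) := by
    simp [fromBlocks_multiply]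
  rw [← mul_one (fromBlocks A B C D), ← hcancel, ← mul_assoc, hMS]
  refine mul_mem (fromBlocks_mem_closure_of_isUnit hunit ?_)
    (lower_fromBlocks_mem_closure hS.neg)
  rw [← hMS]
  exact mul_mem hM (symplecticGenerators_subset (Or.inl (Or.inr ⟨S, hS, rfl⟩)))

end Symplectic

end Matrix

theorem symplectic_group_generated_by_Bg_Sg_Hg_general (g n : ℕ) (hn : 1 ≤ n) :
    (Submonoid.closure
        ({M | ∃ A : GL (Fin g) (ZMod n),
            M = Matrix.fromBlocks (A : Matrix (Fin g) (Fin g) (ZMod n)) 0 0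
              (Matrix.transpose ((A⁻¹ : GL (Fin g) (ZMod n)) : Matrix (Fin g) (Fin g) (ZMod n)))} ∪
         {M | ∃ C : Matrix (Fin g) (Fin g) (ZMod n), C.IsSymm ∧
            M = Matrix.fromBlocks 1 0 C 1} ∪
         {Matrix.fromBlocks (0 : Matrix (Fin g) (Fin g) (ZMod n)) 1 (-1) 0}) :
      Set (Matrix (Fin g ⊕ Fin g) (Fin g ⊕ Fin g) (ZMod n))) =
    {M : Matrix (Fin g ⊕ Fin g) (Fin g ⊕ Fin g) (ZMod n) |
      Matrix.transpose M * Matrix.fromBlocks 0 1 (-1) 0 * M = Matrix.fromBlocks 0 1 (-1) 0} := by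
  have : NeZero n := ⟨by omega⟩
  rw [← Matrix.coe_symplecticGroup,
    ← Matrix.closure_symplecticGenerators Matrix.SymmetricPivotProperty.of_isArtinianRing]
  rfl

/-- For integers `g ≥ 1` and `n ≥ 1`, the symplectic group
`Sp_{2g}(ℤ/nℤ)` (the monoid of `2g × 2g` matrices `M` over `ℤ/nℤ` with
`ᵗM·J·M = J`, where `J = [[0, 1],[−1, 0]]` in `g × g` block form) is generated by
the matrices `B_g(A) = [[A,0],[0,ᵗA⁻¹]]` for `A ∈ GL_g(ℤ/nℤ)`, the matrices
`S_g(C) = [[1,0],[C,1]]` for `C ∈ M_g(ℤ/nℤ)` symmetric, and the matrix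
`H_g = [[0,1],[−1,0]]`. -/
theorem symplectic_group_generated_by_Bg_Sg_Hg (g n : ℕ) (hg : 1 ≤ g) (hn : 1 ≤ n) :
    (Submonoid.closure
        ({M | ∃ A : GL (Fin g) (ZMod n),
            M = Matrix.fromBlocks (A : Matrix (Fin g) (Fin g) (ZMod n)) 0 0
              (Matrix.transpose ((A⁻¹ : GL (Fin g) (ZMod n)) : Matrix (Fin g) (Fin g) (ZMod n)))} ∪
         {M | ∃ C : Matrix (Fin g) (Fin g) (ZMod n), C.IsSymm ∧
            M = Matrix.fromBlocks 1 0 C 1} ∪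
         {Matrix.fromBlocks (0 : Matrix (Fin g) (Fin g) (ZMod n)) 1 (-1) 0}) :
      Set (Matrix (Fin g ⊕ Fin g) (Fin g ⊕ Fin g) (ZMod n))) =
    {M : Matrix (Fin g ⊕ Fin g) (Fin g ⊕ Fin g) (ZMod n) |
      Matrix.transpose M * Matrix.fromBlocks 0 1 (-1) 0 * M = Matrix.fromBlocks 0 1 (-1) 0} :=
  symplectic_group_generated_by_Bg_Sg_Hg_general g n hn
end

section
/- Assume k contains a primitive n-th root of unity and char k does not divide n. Let ψ̄ ∈ Sp(K(n)) and let {v₁,…,v_{2g}} be a ℤ/nℤ-basis of K(n) (every element of K(n) is uniquely a sum ∑ a_k·v_k with a_k ∈ ℤ/nℤ). For each k set B_k := ψ̄(v_k)₂(ψ̄(v_k)₁) and b_k := (v_k)₂((v_k)₁); both are n-th roots of unity. Given t₁,…,t_{2g} ∈ kˣ, there exists a ψ̄-semi-character χ with χ(v_k) = t_k for all k if and only if t_k^n = (B_k·b_k)^{n/2} for all k when n is even, and t_k^n = 1 for all k when n is odd; moreover such χ is unique, and conversely the values χ(v_k) of any ψ̄-semi-character satisfy these conditions. (For the canonical basis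 of K(n) one has b_k = 1, recovering the condition t_k^n = B_k^{n/2} stated in the paper.) -/
namespace ThetaPaper

variable {g n : ℕ} {k : Type*} [Field k]

/-- `Z(n) = (ℤ/nℤ)^g`. -/
abbrev ZGrp (g n : ℕ) := Fin g → ZMod n

/-- `Ẑ(n) = Hom(Z(n), kˣ)`, the group of `kˣ`-valued characters of `Z(n)`,
written additively. -/
abbrev ZHat (g n : ℕ) (k : Type*) [Field k] := AddChar (ZGrp g n) kˣ

/-- `K(n) = Z(n) × Ẑ(n)`. -/
abbrev KGrp (g n : ℕ) (k : Type*) [Field k] := ZGrp g n × ZHat g n k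

/-- The commutator pairing `e_n((x₁,y₁),(x₂,y₂)) = y₁(x₂)·y₂(x₁)⁻¹`. -/
def en (v w : KGrp g n k) : kˣ := v.2 w.1 * (w.2 v.1)⁻¹

/-- The level-`n` Heisenberg group `G(n)`, as the set `kˣ × Z(n) × Ẑ(n)`. -/
@[ext]
structure Heis (g n : ℕ) (k : Type*) [Field k] where
  t : kˣ
  x : ZGrp g n
  y : ZHat g n k

namespace Heis

/-- The Heisenberg multiplication
`(α₁,x₁,y₁)·(α₂,x₂,y₂) = (α₁α₂·y₂(x₁), x₁+x₂, y₁+y₂)`. -/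
instance : Mul (Heis g n k) :=
  ⟨fun a b => ⟨a.t * b.t * b.y a.x, a.x + b.x, a.y + b.y⟩⟩

instance : One (Heis g n k) := ⟨⟨1, 0, 0⟩⟩

instance : Inv (Heis g n k) :=
  ⟨fun a => ⟨a.t⁻¹ * a.y a.x, -a.x, -a.y⟩⟩

@[simp] lemma mul_t (a b : Heis g n k) : (a * b).t = a.t * b.t * b.y a.x := rfl
@[simp] lemma mul_x (a b : Heis g n k) : (a * b).x = a.x + b.x := rfl
@[simp] lemma mul_y (a b : Heis g n k) : (a * b).y = a.y + b.y := rfl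
@[simp] lemma one_t : (1 : Heis g n k).t = 1 := rfl
@[simp] lemma one_x : (1 : Heis g n k).x = 0 := rfl
@[simp] lemma one_y : (1 : Heis g n k).y = 0 := rfl
@[simp] lemma inv_t (a : Heis g n k) : a⁻¹.t = a.t⁻¹ * a.y a.x := rfl
@[simp] lemma inv_x (a : Heis g n k) : a⁻¹.x = -a.x := rfl
@[simp] lemma inv_y (a : Heis g n k) : a⁻¹.y = -a.y := rfl

instance : Group (Heis g n k) :=
  Group.ofLeftAxioms
    (fun a b c => by
      ext <;>
        simp [AddChar.map_add_eq_mul, mul_assoc, mul_comm, mul_left_comm, add_assoc])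
    (fun a => by ext <;> simp)
    (fun a => by
      ext <;> simp [AddChar.map_neg_eq_inv, mul_comm, mul_left_comm, mul_assoc])

/-- The canonical projection `π : G(n) → K(n)`, `(α,x,y) ↦ (x,y)`. -/
def toK (h : Heis g n k) : KGrp g n k := (h.x, h.y)

/-- The automorphism `D₋₁ : (α,x,y) ↦ (α,−x,−y)`. -/
def Dneg (h : Heis g n k) : Heis g n k := ⟨h.t, -h.x, -h.y⟩

/-- A symmetric element of the Heisenberg group: `D₋₁(h) = h⁻¹`. -/
def IsSymElem (h : Heis g n k) : Prop := Dneg h = h⁻¹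

end Heis

/-- The `ψ`-semi-character identity:
`χ(v+w) = χ(v)·χ(w)·[ψ(w)₂(ψ(v)₁)]·[w₂(v₁)]⁻¹`. -/
def IsSemiChar (ψ : KGrp g n k → KGrp g n k) (χ : KGrp g n k → kˣ) : Prop :=
  ∀ v w : KGrp g n k,
    χ (v + w) = χ v * χ w * (ψ w).2 (ψ v).1 * ((w.2 v.1)⁻¹ : kˣ)

/-- A symmetric (semi-)character: `χ(−v) = χ(v)`. -/
def IsSymmChar (χ : KGrp g n k → kˣ) : Prop := ∀ v : KGrp g n k, χ (-v) = χ v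

/-- `ψ̄ ∈ Sp(K(n))`: an additive automorphism preserving the pairing `e_n`. -/
def IsSymplectic (ψ : KGrp g n k ≃+ KGrp g n k) : Prop :=
  ∀ v w : KGrp g n k, en (ψ v) (ψ w) = en v w

/-!
Put `F(v, w) = ψ̄(w)₂(ψ̄(v)₁) · w₂(v₁)⁻¹`. A `ψ̄`-semi-character is exactly a function with
`χ(v + w) = χ(v) χ(w) F(v, w)`, a quadratic refinement of `F`; the form `F` is bimultiplicative,
and it is symmetric because `ψ̄` preserves `e_n`.

Two refinements of the same form differ by a character, so a refinement is determined by its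
values on a basis. Iterating the defining identity gives `χ(m v) = χ(v)^m F(v, v)^(m choose 2)`;
as `n v = 0`, this forces `χ(v)^n F(v, v)^(n choose 2) = 1`, which is the stated condition because
`F(v, v) = B b⁻¹` with `B, b` both `n`-th roots of unity. Conversely, given such values `t_k`, put
`χ(∑ a_k v_k) = ∏_k t_k^(a_k) F(v_k, v_k)^(a_k choose 2) · ∏_(k < l) F(a_k v_k, a_l v_l)`.
The condition on `t_k` makes the `k`-th diagonal factor `n`-periodic in `a_k`, so `χ` is well
defined on `K(n)`, and splitting `F(∑ a_k v_k, ∑ b_l v_l)` into its diagonal and the two triangles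
shows that `χ` is a refinement of `F`.
-/

open Finset

section QuadraticPow

variable {M : Type*} [CommMonoid M]

lemma add_choose_two (m m' : ℕ) : (m + m').choose 2 = m.choose 2 + m'.choose 2 + m * m' := by
  induction m' with
  | zero => simp
  | succ m' ih =>
    rw [← add_assoc, Nat.choose_succ_succ', ih, Nat.choose_succ_succ', Nat.choose_one_right,
      Nat.choose_one_right]
    ring

def quadraticPow (t c : M) (m : ℕ) : M := t ^ m * c ^ m.choose 2

@[simp] lemma quadraticPow_zero (t c : M) : quadraticPow t c 0 = 1 := by simp [quadraticPow]

lemma quadraticPow_add (t c : M) (m m' : ℕ) :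
    quadraticPow t c (m + m') = quadraticPow t c m * quadraticPow t c m' * c ^ (m * m') := by
  simp only [quadraticPow, add_choose_two, pow_add]
  ac_rfl

lemma quadraticPow_periodic {n : ℕ} {t c : M} (hc : c ^ n = 1) (ht : quadraticPow t c n = 1) :
    Function.Periodic (quadraticPow t c) n := fun m => by
  rw [quadraticPow_add, ht, mul_comm m n, pow_mul, hc, one_pow, mul_one, mul_one]

lemma quadraticPow_val_add {n : ℕ} [NeZero n] {t c : M} (hc : c ^ n = 1)
    (ht : quadraticPow t c n = 1) (z w : ZMod n) :
    quadraticPow t c (z + w).val = quadraticPow t c z.val * quadraticPow t c w.val *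
      c ^ (z.val * w.val) := by
  rw [ZMod.val_add, (quadraticPow_periodic hc ht).map_mod_nat, quadraticPow_add]

end QuadraticPow

lemma inv_pow_choose_two_eq_ite {G : Type*} [CommGroup G] {n : ℕ} {B b : G}
    (hB : B ^ n = 1) (hb : b ^ n = 1) :
    ((B * b⁻¹) ^ n.choose 2)⁻¹ = if Even n then (B * b) ^ (n / 2) else 1 := by
  have hc : (B * b⁻¹) ^ n = 1 := by rw [mul_pow, inv_pow, hB, hb, inv_one, mul_one]
  split_ifs with hn
  · obtain ⟨m, rfl⟩ := hn
    have hchoose : (m + m).choose 2 + m = m * (m + m) := by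
      rcases Nat.eq_zero_or_pos m with rfl | hm
      · simp
      · rw [Nat.choose_two_right, ← two_mul, mul_assoc, Nat.mul_div_cancel_left _ two_pos,
          ← Nat.mul_add_one, Nat.sub_add_cancel (by omega)]
    have hb' : b ^ m = (b ^ m)⁻¹ := by rw [eq_inv_iff_mul_eq_one, ← pow_add, hb]
    rw [show (m + m) / 2 = m by omega, mul_pow B b m, hb', ← inv_pow b m, ← mul_pow B b⁻¹ m]
    refine inv_eq_of_mul_eq_one_right ?_
    rw [← pow_add, hchoose, pow_mul', hc, one_pow]
  · obtain ⟨m, rfl⟩ := Nat.not_even_iff_odd.mp hn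
    have hchoose : (2 * m + 1).choose 2 = (2 * m + 1) * m := by
      rw [Nat.choose_two_right, Nat.add_sub_cancel, mul_comm 2 m, ← mul_assoc,
        Nat.mul_div_cancel _ two_pos]
    rw [hchoose, pow_mul, hc, one_pow, inv_one]

lemma AddChar.pow_eq_one_of_nsmul_eq_zero {A M : Type*} [AddMonoid A] [Monoid M] {n : ℕ}
    (ψ : AddChar A M) {a : A} (ha : n • a = 0) : ψ a ^ n = 1 := by
  rw [← ψ.map_nsmul_eq_pow, ha, ψ.map_zero_eq_one]

lemma AddChar.map_sum_eq_prod {ι A M : Type*} [AddCommMonoid A] [CommMonoid M]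
    (ψ : AddChar A M) (s : Finset ι) (a : ι → A) : ψ (∑ i ∈ s, a i) = ∏ i ∈ s, ψ (a i) := by
  induction s using Finset.cons_induction with
  | empty => simp
  | cons i s hi ih => rw [sum_cons, prod_cons, AddChar.map_add_eq_mul, ih]

section QuadraticRefinement

variable {A M : Type*} [AddCommGroup A] [CommGroup M]

def IsQuadraticRefinement (F : AddChar A (AddChar A M)) (χ : A → M) : Prop :=
  ∀ a b, χ (a + b) = χ a * χ b * F a b

namespace IsQuadraticRefinement

variable {F : AddChar A (AddChar A M)} {χ : A → M}

lemma map_zero (h : IsQuadraticRefinement F χ) : χ 0 = 1 := by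
  simpa using h 0 0

lemma map_nsmul (h : IsQuadraticRefinement F χ) (m : ℕ) (a : A) :
    χ (m • a) = quadraticPow (χ a) (F a a) m := by
  induction m with
  | zero => simp [h.map_zero]
  | succ m ih =>
    rw [succ_nsmul, h, ih, quadraticPow_add, AddChar.map_nsmul_eq_pow, AddChar.pow_apply]
    simp [quadraticPow]

def divAddChar {χ' : A → M} (h : IsQuadraticRefinement F χ) (h' : IsQuadraticRefinement F χ') :
    AddChar A M where
  toFun a := χ a / χ' a
  map_zero_eq_one' := by rw [h.map_zero, h'.map_zero, div_one]
  map_add_eq_mul' a b := by rw [h, h', mul_div_mul_right_eq_div, mul_div_mul_comm]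

lemma quadraticPow_eq_one (h : IsQuadraticRefinement F χ) {n : ℕ} {a : A} (ha : n • a = 0) :
    quadraticPow (χ a) (F a a) n = 1 := by
  rw [← h.map_nsmul, ha, h.map_zero]

lemma eq_of_eq_on_generators {ι : Type*} [Fintype ι] {χ' : A → M}
    (h : IsQuadraticRefinement F χ) (h' : IsQuadraticRefinement F χ') {v : ι → A}
    (hv : ∀ a, ∃ m : ι → ℕ, ∑ i, m i • v i = a) (heq : ∀ i, χ (v i) = χ' (v i)) : χ = χ' := by
  funext a
  obtain ⟨m, rfl⟩ := hv a
  rw [← div_eq_one]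
  change h.divAddChar h' _ = 1
  rw [AddChar.map_sum_eq_prod]
  refine prod_eq_one fun i _ => ?_
  rw [AddChar.map_nsmul_eq_pow]
  simp [divAddChar, heq i]

end IsQuadraticRefinement

end QuadraticRefinement

lemma prod_prod_eq_diag_mul_triangles {ι M : Type*} [Fintype ι] [LinearOrder ι] [CommMonoid M]
    (G : ι → ι → M) :
    ∏ i, ∏ j, G i j =
      (∏ i, G i i) * (∏ i, ∏ j with i < j, G i j) * ∏ i, ∏ j with i < j, G j i := by
  have hrow : ∀ i j, G i j = (if i = j then G i j else 1) * (if i < j then G i j else 1) *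
      (if j < i then G i j else 1) := by
    intro i j
    rcases lt_trichotomy i j with h | rfl | h
    · simp [h, h.ne, h.not_gt]
    · simp
    · simp [h, h.ne', h.not_gt]
  have hlower : ∏ i, ∏ j with j < i, G i j = ∏ i, ∏ j with i < j, G j i :=
    prod_comm' (by simp)
  calc _ = ∏ i, ∏ j, ((if i = j then G i j else 1) * (if i < j then G i j else 1) *
          (if j < i then G i j else 1)) :=
        prod_congr rfl fun i _ => prod_congr rfl fun j _ => hrow i j
    _ = _ := by simp only [prod_mul_distrib, prod_ite_eq, mem_univ, if_true, ← prod_filter, hlower]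

lemma nsmul_zmod_pi_eq_zero {ι : Type*} {n : ℕ} (a : ι → ZMod n) : n • a = 0 := by
  ext; simp

lemma single_eq_val_nsmul {ι : Type*} [DecidableEq ι] {n : ℕ} [NeZero n] (i : ι) (z : ZMod n) :
    Pi.single i z = z.val • (Pi.single i 1 : ι → ZMod n) := by
  rw [← Pi.single_smul, nsmul_eq_mul, mul_one, ZMod.natCast_zmod_val]

section Existence

variable {ι A M : Type*} [LinearOrder ι] [AddCommGroup A] [CommGroup M] {n : ℕ}
  (F : AddChar A (AddChar A M)) (e : (ι → ZMod n) ≃+ A) (t : ι → M)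

lemma pow_form_single_eq_one (i : ι) : F (e (Pi.single i 1)) (e (Pi.single i 1)) ^ n = 1 :=
  AddChar.pow_eq_one_of_nsmul_eq_zero _ (by rw [← map_nsmul, nsmul_zmod_pi_eq_zero, map_zero])

variable [Fintype ι]

def refinementOfBasis (a : ι → ZMod n) : M :=
  (∏ i, quadraticPow (t i) (F (e (Pi.single i 1)) (e (Pi.single i 1))) (a i).val) *
    ∏ i, ∏ j with i < j, F (e (Pi.single i (a i))) (e (Pi.single j (a j)))

lemma refinementOfBasis_single
    (ht : ∀ i, quadraticPow (t i) (F (e (Pi.single i 1)) (e (Pi.single i 1))) n = 1) (i : ι) :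
    refinementOfBasis F e t (Pi.single i 1) = t i := by
  have hone : quadraticPow (t i) (F (e (Pi.single i 1)) (e (Pi.single i 1)))
      (1 : ZMod n).val = t i := by
    rw [ZMod.val_one_eq_one_mod,
      (quadraticPow_periodic (pow_form_single_eq_one F e i) (ht i)).map_mod_nat]
    simp [quadraticPow]
  have hdiag : ∏ j, quadraticPow (t j) (F (e (Pi.single j 1)) (e (Pi.single j 1)))
      ((Pi.single i 1 : ι → ZMod n) j).val = t i := by
    rw [prod_eq_single i (fun j _ hj => by rw [Pi.single_eq_of_ne hj, ZMod.val_zero,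
      quadraticPow_zero]) (by simp), Pi.single_eq_same, hone]
  have hcross : ∏ j, ∏ l with j < l, F (e (Pi.single j ((Pi.single i 1 : ι → ZMod n) j)))
      (e (Pi.single l ((Pi.single i 1 : ι → ZMod n) l))) = 1 :=
    prod_eq_one fun j _ => prod_eq_one fun l hl => by
      rcases eq_or_ne j i with rfl | hj
      · rw [Pi.single_eq_of_ne (mem_filter.mp hl).2.ne', Pi.single_zero, map_zero,
          AddChar.map_zero_eq_one]
      · rw [Pi.single_eq_of_ne hj, Pi.single_zero, map_zero, AddChar.map_zero_eq_one,
          AddChar.one_apply]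
  rw [refinementOfBasis, hdiag, hcross, mul_one]

variable [NeZero n]

lemma refinementOfBasis_add (hF : ∀ a b, F a b = F b a)
    (ht : ∀ i, quadraticPow (t i) (F (e (Pi.single i 1)) (e (Pi.single i 1))) n = 1)
    (a b : ι → ZMod n) :
    refinementOfBasis F e t (a + b) =
      refinementOfBasis F e t a * refinementOfBasis F e t b * F (e a) (e b) := by
  have he : ∀ a : ι → ZMod n, e a = ∑ i, e (Pi.single i (a i)) := fun a => by
    conv_lhs => rw [← univ_sum_single a]
    exact map_sum e _ _
  have hdiag : ∀ i (z w : ZMod n), F (e (Pi.single i 1)) (e (Pi.single i 1)) ^ (z.val * w.val) =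
      F (e (Pi.single i z)) (e (Pi.single i w)) := fun i z w => by
    rw [single_eq_val_nsmul i z, single_eq_val_nsmul i w, map_nsmul e, map_nsmul e,
      AddChar.map_nsmul_eq_pow, AddChar.map_nsmul_eq_pow, AddChar.pow_apply, ← pow_mul]
  have hF_add : ∀ y y' z z' : A, F (y + y') (z + z') = F y z * F y' z' * (F y z' * F z y') :=
    fun y y' z z' => by
      simp only [AddChar.map_add_eq_mul, AddChar.mul_apply, hF y' z]
      ac_rfl
  have hsplit : F (e a) (e b) =
      (∏ i, F (e (Pi.single i (a i))) (e (Pi.single i (b i)))) *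
        ((∏ i, ∏ j with i < j, F (e (Pi.single i (a i))) (e (Pi.single j (b j)))) *
          ∏ i, ∏ j with i < j, F (e (Pi.single j (a j))) (e (Pi.single i (b i)))) := by
    simp_rw [he a, he b, AddChar.map_sum_eq_prod, AddChar.prod_apply]
    rw [prod_comm, prod_prod_eq_diag_mul_triangles, mul_assoc]
  simp only [refinementOfBasis, Pi.add_apply, Pi.single_add, map_add,
    quadraticPow_val_add (pow_form_single_eq_one F e _) (ht _), hdiag, hF_add, hsplit,
    prod_mul_distrib]
  ac_rfl

theorem exists_isQuadraticRefinement (hF : ∀ a b, F a b = F b a)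
    (ht : ∀ i, quadraticPow (t i) (F (e (Pi.single i 1)) (e (Pi.single i 1))) n = 1) :
    ∃ χ : A → M, IsQuadraticRefinement F χ ∧ ∀ i, χ (e (Pi.single i 1)) = t i :=
  ⟨fun u => refinementOfBasis F e t (e.symm u),
    fun u w => by simp only [map_add, refinementOfBasis_add F e t hF ht, e.apply_symm_apply],
    fun i => by simp only [e.symm_apply_apply, refinementOfBasis_single F e t ht]⟩

end Existence

section Coordinates

variable {ι A : Type*} [Fintype ι] [AddCommGroup A] {n : ℕ} [NeZero n] (v : ι → A)

def zmodCombination (hv : ∀ i, n • v i = 0) : (ι → ZMod n) →+ A where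
  toFun a := ∑ i, (a i).val • v i
  map_zero' := by simp
  map_add' a b := by
    simp only [Pi.add_apply, ZMod.val_add, ← nsmul_eq_mod_nsmul _ (hv _), add_nsmul,
      sum_add_distrib]

lemma zmodCombination_single [DecidableEq ι] (hv : ∀ i, n • v i = 0) (i : ι) :
    zmodCombination v hv (Pi.single i 1) = v i := by
  rw [zmodCombination, AddMonoidHom.coe_mk, ZeroHom.coe_mk,
    sum_eq_single i (fun j _ hj => by rw [Pi.single_eq_of_ne hj, ZMod.val_zero, zero_nsmul])
      (by simp), Pi.single_eq_same, ZMod.val_one_eq_one_mod, ← nsmul_eq_mod_nsmul _ (hv i),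
    one_nsmul]

end Coordinates

lemma ZGrp.nsmul_eq_zero (x : ZGrp g n) : n • x = 0 := nsmul_zmod_pi_eq_zero x

lemma KGrp.nsmul_eq_zero (u : KGrp g n k) : n • u = 0 :=
  Prod.ext (ZGrp.nsmul_eq_zero u.1) <| AddChar.ext _ _ fun x =>
    AddChar.pow_eq_one_of_nsmul_eq_zero u.2 (ZGrp.nsmul_eq_zero x)

def semiCharForm (ψ : KGrp g n k ≃+ KGrp g n k) :
    AddChar (KGrp g n k) (AddChar (KGrp g n k) kˣ) where
  toFun v :=
    { toFun := fun w => (ψ w).2 (ψ v).1 * (w.2 v.1)⁻¹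
      map_zero_eq_one' := by rw [map_zero]; simp
      map_add_eq_mul' := fun w w' => by
        rw [map_add, Prod.snd_add, Prod.snd_add, AddChar.add_apply, AddChar.add_apply, mul_inv,
          mul_mul_mul_comm] }
  map_zero_eq_one' := by
    ext w
    simp only [map_zero, Prod.fst_zero, AddChar.map_zero_eq_one, inv_one, mul_one,
      AddChar.coe_mk, AddChar.one_apply]
  map_add_eq_mul' v v' := by
    ext w
    simp only [map_add, Prod.fst_add, AddChar.map_add_eq_mul, AddChar.coe_mk, AddChar.mul_apply,
      mul_inv, mul_mul_mul_comm]

variable {ψ : KGrp g n k ≃+ KGrp g n k}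

lemma isSemiChar_iff_isQuadraticRefinement {χ : KGrp g n k → kˣ} :
    IsSemiChar ψ χ ↔ IsQuadraticRefinement (semiCharForm ψ) χ := by
  simp [IsSemiChar, IsQuadraticRefinement, semiCharForm, mul_assoc]

lemma semiCharForm_comm (hψ : IsSymplectic ψ) (v w : KGrp g n k) :
    semiCharForm ψ v w = semiCharForm ψ w v := by
  have h := hψ v w
  simp only [en, ← div_eq_mul_inv] at h
  simp only [semiCharForm, AddChar.coe_mk, ← div_eq_mul_inv]
  rw [div_eq_div_iff_div_eq_div, ← inv_div, h, inv_div]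

lemma pow_eq_ite_iff_quadraticPow_eq_one (x : KGrp g n k) (s : kˣ) :
    (s ^ n = if Even n then ((ψ x).2 (ψ x).1 * x.2 x.1) ^ (n / 2) else 1) ↔
      quadraticPow s (semiCharForm ψ x x) n = 1 := by
  rw [quadraticPow, mul_eq_one_iff_eq_inv, ← inv_pow_choose_two_eq_ite
    (AddChar.pow_eq_one_of_nsmul_eq_zero _ (ZGrp.nsmul_eq_zero _))
    (AddChar.pow_eq_one_of_nsmul_eq_zero _ (ZGrp.nsmul_eq_zero _))]
  rfl

theorem semichar_exists_unique_iff_general (g n : ℕ) (hn : 1 ≤ n)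
    (k : Type*) [Field k] (ψ : KGrp g n k ≃+ KGrp g n k) (hψ : IsSymplectic ψ)
    (v : Fin (2 * g) → KGrp g n k)
    (hbasis : Function.Bijective fun a : Fin (2 * g) → ZMod n => ∑ i, (a i).val • v i)
    (t : Fin (2 * g) → kˣ) :
    ((∃! χ : KGrp g n k → kˣ, IsSemiChar (⇑ψ) χ ∧ ∀ i, χ (v i) = t i) ↔
      (∀ i, t i ^ n =
        if Even n then ((ψ (v i)).2 (ψ (v i)).1 * (v i).2 (v i).1) ^ (n / 2) else 1)) ∧
    (∀ χ : KGrp g n k → kˣ, IsSemiChar (⇑ψ) χ → ∀ i,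
      χ (v i) ^ n =
        if Even n then ((ψ (v i)).2 (ψ (v i)).1 * (v i).2 (v i).1) ^ (n / 2) else 1) := by
  have : NeZero n := ⟨by omega⟩
  have necessary : ∀ χ : KGrp g n k → kˣ, IsSemiChar (⇑ψ) χ → ∀ i, χ (v i) ^ n =
      if Even n then ((ψ (v i)).2 (ψ (v i)).1 * (v i).2 (v i).1) ^ (n / 2) else 1 :=
    fun χ hχ i => (pow_eq_ite_iff_quadraticPow_eq_one _ _).2 <|
      (isSemiChar_iff_isQuadraticRefinement.1 hχ).quadraticPow_eq_one (KGrp.nsmul_eq_zero _)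
  refine ⟨⟨fun ⟨χ, ⟨hχ, hval⟩, _⟩ i => hval i ▸ necessary χ hχ i, fun ht => ?_⟩, necessary⟩
  have hv : ∀ i, n • v i = 0 := fun i => KGrp.nsmul_eq_zero (v i)
  let e := AddEquiv.ofBijective (zmodCombination v hv) hbasis
  have he : ∀ i, e (Pi.single i 1) = v i := zmodCombination_single v hv
  obtain ⟨χ, hχ, hval⟩ := exists_isQuadraticRefinement (A := KGrp g n k) (semiCharForm ψ) e t
    (semiCharForm_comm hψ) fun i => he i ▸ (pow_eq_ite_iff_quadraticPow_eq_one _ _).1 (ht i)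
  refine ⟨χ, ⟨isSemiChar_iff_isQuadraticRefinement.2 hχ, fun i => he i ▸ hval i⟩,
    fun χ' ⟨hχ', hval'⟩ => ?_⟩
  refine (isSemiChar_iff_isQuadraticRefinement.1 hχ').eq_of_eq_on_generators hχ (v := v)
    (fun a => ?_) fun i => by rw [hval', ← he, hval]
  obtain ⟨c, rfl⟩ := hbasis.2 a
  exact ⟨fun i => (c i).val, rfl⟩

/-- existence and uniqueness of a `ψ̄`-semi-character with prescribed
values `t k` on a `ℤ/nℤ`-basis `v` of `K(n)`, and the necessary condition satisfied
by the values of any `ψ̄`-semi-character. -/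
theorem semichar_exists_unique_iff (g n : ℕ) (hg : 1 ≤ g) (hn : 1 ≤ n)
    (k : Type*) [Field k] (ζ : k) (hζ : IsPrimitiveRoot ζ n) (hchar : (n : k) ≠ 0)
    (ψ : KGrp g n k ≃+ KGrp g n k) (hψ : IsSymplectic ψ)
    (v : Fin (2 * g) → KGrp g n k)
    (hbasis : Function.Bijective fun a : Fin (2 * g) → ZMod n => ∑ i, (a i).val • v i)
    (t : Fin (2 * g) → kˣ) :
    ((∃! χ : KGrp g n k → kˣ, IsSemiChar (⇑ψ) χ ∧ ∀ i, χ (v i) = t i) ↔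
      (∀ i, t i ^ n =
        if Even n then ((ψ (v i)).2 (ψ (v i)).1 * (v i).2 (v i).1) ^ (n / 2) else 1)) ∧
    (∀ χ : KGrp g n k → kˣ, IsSemiChar (⇑ψ) χ → ∀ i,
      χ (v i) ^ n =
        if Even n then ((ψ (v i)).2 (ψ (v i)).1 * (v i).2 (v i).1) ^ (n / 2) else 1) :=
  semichar_exists_unique_iff_general g n hn k ψ hψ v hbasis t

end ThetaPaper
end

section
/- Let ψ̄ ∈ Sp(K(n)). A ψ̄-semi-character χ is symmetric if and only if χ(v)² = ψ̄(v)₂(ψ̄(v)₁)·[v₂(v₁)]⁻¹ for all v ∈ K(n); moreover, it suffices to verify this identity for v ranging over any ℤ/nℤ-basis {v₁,…,v_{2g}} of K(n). (For the canonical basis, where (v_k)₂((v_k)₁) = 1, this is the paper's criterion χ(v_k)² = ψ̄(v_k)₂(ψ̄(v_k)₁).) -/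
namespace ThetaPaper

variable {g n : ℕ} {k : Type*} [Field k]

set_option maxHeartbeats 1000000 in
lemma qadd_aux {k : Type*} [Field k] (ca cb A B S T U X Y P : kˣ)
    (hs : P * X⁻¹ = S * Y⁻¹) :
    (ca * cb * X * Y⁻¹) ^ 2 * (A * S * (Y * B)) * (T * P * (X * U))⁻¹
      = ca ^ 2 * A * T⁻¹ * (cb ^ 2 * B * U⁻¹) := by
  have hP : P = S * Y⁻¹ * X := by
    have h := congrArg (· * X) hs
    simpa [mul_assoc] using h
  subst hP
  ext
  push_cast
  field_simp

set_option maxHeartbeats 1000000 in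
/-- a `ψ̄`-semi-character `χ` is symmetric if and only if
`χ(v)² = ψ̄(v)₂(ψ̄(v)₁)·[v₂(v₁)]⁻¹` for all `v ∈ K(n)`; moreover it suffices to
verify this identity on any `ℤ/nℤ`-basis of `K(n)`. -/
theorem symmchar_iff_square_identity (g n : ℕ) (hg : 1 ≤ g) (hn : 1 ≤ n)
    (k : Type*) [Field k]
    (ψ : KGrp g n k ≃+ KGrp g n k) (hψ : IsSymplectic ψ)
    (χ : KGrp g n k → kˣ) (hχ : IsSemiChar (⇑ψ) χ) :
    (IsSymmChar χ ↔
      ∀ v : KGrp g n k, χ v ^ 2 = (ψ v).2 (ψ v).1 * ((v.2 v.1)⁻¹ : kˣ)) ∧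
    (∀ v : Fin (2 * g) → KGrp g n k,
      (Function.Bijective fun a : Fin (2 * g) → ZMod n => ∑ i, (a i).val • v i) →
      (∀ i, χ (v i) ^ 2 = (ψ (v i)).2 (ψ (v i)).1 * (((v i).2 (v i).1)⁻¹ : kˣ)) →
      IsSymmChar χ) := by
  have hψ0 : ψ (0 : KGrp g n k) = 0 := map_zero ψ
  have hχ0 : χ 0 = 1 := by
    have h := hχ 0 0
    have e0 : (0 : KGrp g n k) + 0 = 0 := add_zero (0 : KGrp g n k)
    rw [e0, hψ0] at h
    simp only [Prod.snd_zero, Prod.fst_zero, AddChar.zero_apply, inv_one, mul_one] at h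
    exact (left_eq_mul.mp h)
  have hprod : ∀ v : KGrp g n k,
      χ v * χ (-v) = (ψ v).2 (ψ v).1 * ((v.2 v.1)⁻¹ : kˣ) := by
    intro v
    have h := hχ v (-v)
    have e0 : v + -v = (0 : KGrp g n k) := add_neg_cancel v
    rw [e0, hχ0, map_neg ψ] at h
    simp only [Prod.snd_neg, Prod.fst_neg, AddChar.neg_apply,
      AddChar.map_neg_eq_inv, inv_inv] at h
    ext
    have hh := congrArg Units.val h
    push_cast at hh ⊢
    field_simp at hh ⊢
    linear_combination hh.symm
  have hiff : ∀ v : KGrp g n k,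
      χ (-v) = χ v ↔ χ v ^ 2 = (ψ v).2 (ψ v).1 * ((v.2 v.1)⁻¹ : kˣ) := by
    intro v
    constructor
    · intro h
      have h2 := hprod v
      rw [h] at h2
      rw [pow_two]
      exact h2
    · intro h
      exact mul_left_cancel (((hprod v).trans h.symm).trans (pow_two (χ v)))
  have part1 : IsSymmChar χ ↔
      ∀ v : KGrp g n k, χ v ^ 2 = (ψ v).2 (ψ v).1 * ((v.2 v.1)⁻¹ : kˣ) :=
    ⟨fun h v => (hiff v).mp (h v), fun h v => (hiff v).mpr (h v)⟩
  refine ⟨part1, ?_⟩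
  intro v hb hident
  set Q : KGrp g n k → kˣ :=
    fun w => χ w ^ 2 * w.2 w.1 * (((ψ w).2 (ψ w).1)⁻¹ : kˣ) with hQ
  have hQ0 : Q 0 = 1 := by
    simp only [hQ, hχ0, hψ0, Prod.snd_zero, Prod.fst_zero, AddChar.zero_apply,
      inv_one, mul_one, one_pow]
  have hQadd : ∀ a b : KGrp g n k, Q (a + b) = Q a * Q b := by
    intro a b
    have hs : (ψ a).2 (ψ b).1 * (((ψ b).2 (ψ a).1)⁻¹ : kˣ)
        = a.2 b.1 * ((b.2 a.1)⁻¹ : kˣ) := hψ a b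
    have h1 : (a + b).2 (a + b).1
        = a.2 a.1 * a.2 b.1 * (b.2 a.1 * b.2 b.1) := by
      rw [Prod.snd_add, Prod.fst_add, AddChar.add_apply,
        AddChar.map_add_eq_mul, AddChar.map_add_eq_mul]
    have h2 : (ψ (a + b)).2 (ψ (a + b)).1
        = (ψ a).2 (ψ a).1 * (ψ a).2 (ψ b).1 *
            ((ψ b).2 (ψ a).1 * (ψ b).2 (ψ b).1) := by
      rw [map_add ψ, Prod.snd_add, Prod.fst_add, AddChar.add_apply,
        AddChar.map_add_eq_mul, AddChar.map_add_eq_mul]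
    simp only [hQ]
    rw [hχ a b, h1, h2]
    exact qadd_aux (χ a) (χ b) (a.2 a.1) (b.2 b.1) (a.2 b.1)
      ((ψ a).2 (ψ a).1) ((ψ b).2 (ψ b).1) ((ψ b).2 (ψ a).1) (b.2 a.1)
      ((ψ a).2 (ψ b).1) hs
  have hQpow : ∀ (c : ℕ) (w : KGrp g n k), Q (c • w) = Q w ^ c := by
    intro c w
    induction c with
    | zero => simpa [zero_nsmul] using hQ0
    | succ m ih => rw [succ_nsmul, hQadd, ih, pow_succ]
  have hQsum : ∀ (s : Finset (Fin (2 * g))) (f : Fin (2 * g) → KGrp g n k),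
      Q (∑ i ∈ s, f i) = ∏ i ∈ s, Q (f i) := by
    intro s f
    induction s using Finset.cons_induction with
    | empty => simpa using hQ0
    | cons i s hi ih => rw [Finset.sum_cons, Finset.prod_cons, hQadd, ih]
  have hQbasis : ∀ i, Q (v i) = 1 := by
    intro i
    simp only [hQ]
    rw [hident i]
    group
  have hQall : ∀ w : KGrp g n k, Q w = 1 := by
    intro w
    obtain ⟨a, ha⟩ := hb.surjective w
    rw [← ha, hQsum]
    refine Finset.prod_eq_one fun i _ => ?_
    rw [hQpow, hQbasis, one_pow]
  refine part1.mpr fun w => ?_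
  have h := hQall w
  simp only [hQ] at h
  ext
  have hh := congrArg Units.val h
  push_cast at hh ⊢
  field_simp at hh ⊢
  linear_combination hh

end ThetaPaper
end

section
/- Let ψ̄ : K(n) → K(n) be an additive bijection and χ : K(n) → kˣ any map, and define ψ : G(n) → G(n) by ψ((α, v)) := (α·χ(v), ψ̄(v)). Then: (i) ψ is a group homomorphism if and only if χ satisfies the ψ̄-semi-character identity; (ii) if ψ is a group homomorphism then ψ̄ preserves the pairing e_n, and ψ is an automorphism of G(n) restricting to the identity on the center kˣ×{0}×{0} and inducing ψ̄ on K(n); (iii) ψ ∘ D₋₁ = D₋₁ ∘ ψ if and only if χ is symmetric; (iv) conversely, every automorphism of G(n) restricting to the identity on kˣ×{0}×{0} equals such a ψ for a unique pair (ψ̄, χ) with χ a ψ̄-semi-character. -/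
namespace ThetaPaper

variable {g n : ℕ} {k : Type*} [Field k]

/-- The map `ψ : G(n) → G(n)`, `(α, v) ↦ (α·χ(v), ψ̄(v))`, associated to a map
`ψ̄ : K(n) → K(n)` and a map `χ : K(n) → kˣ`. -/
def liftedMap (ψb : KGrp g n k → KGrp g n k) (χ : KGrp g n k → kˣ)
    (h : Heis g n k) : Heis g n k :=
  ⟨h.t * χ h.toK, (ψb h.toK).1, (ψb h.toK).2⟩

/-!
Every `h = (α, v)` factors as `(α, 0, 0) · (1, v)` with `(α, 0, 0)` central, so a
homomorphism fixing the centre is `liftedMap ψ̄ χ` for the pair read off from the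
section `v ↦ (1, v)`: `ψ̄(v)` is the `K(n)`-part and `χ(v)` the scalar of the image of
`(1, v)`; applying the same to `f⁻¹` inverts `ψ̄`. Comparing scalars of the images of
`(1, v)(1, w) = (w₂(v₁), v + w)` turns multiplicativity into the semi-character identity;
exchanging `v` and `w` in that identity and dividing shows that `ψ̄` preserves `e_n`.
-/

namespace Heis

def ofK (v : KGrp g n k) : Heis g n k := ⟨1, v.1, v.2⟩

@[simp] lemma toK_ofK (v : KGrp g n k) : (ofK v).toK = v := rfl

@[simp] lemma ofK_t (v : KGrp g n k) : (ofK v).t = 1 := rfl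

@[simp] lemma ofK_x (v : KGrp g n k) : (ofK v).x = v.1 := rfl

@[simp] lemma ofK_y (v : KGrp g n k) : (ofK v).y = v.2 := rfl

lemma ext_toK {a b : Heis g n k} (ht : a.t = b.t) (hK : a.toK = b.toK) : a = b := by
  ext1
  exacts [ht, congrArg Prod.fst hK, congrArg Prod.snd hK]

lemma toK_mul (a b : Heis g n k) : (a * b).toK = a.toK + b.toK := rfl

@[simp] lemma toK_center (u : kˣ) : (⟨u, 0, 0⟩ : Heis g n k).toK = 0 := rfl

@[simp] lemma Dneg_t (h : Heis g n k) : (Dneg h).t = h.t := rfl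

@[simp] lemma toK_Dneg (h : Heis g n k) : (Dneg h).toK = -h.toK := rfl

lemma mk_eq_center_mul_ofK (h : Heis g n k) : h = ⟨h.t, 0, 0⟩ * ofK h.toK := by
  ext <;> simp [ofK, toK]

end Heis

open Heis

section liftedMap

variable {F : Type*} [FunLike F (KGrp g n k) (KGrp g n k)]
  [AddMonoidHomClass F (KGrp g n k) (KGrp g n k)]

@[simp] lemma liftedMap_t (ψ : KGrp g n k → KGrp g n k) (χ : KGrp g n k → kˣ)
    (h : Heis g n k) : (liftedMap ψ χ h).t = h.t * χ h.toK := rfl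

@[simp] lemma liftedMap_toK (ψ : KGrp g n k → KGrp g n k) (χ : KGrp g n k → kˣ)
    (h : Heis g n k) : (liftedMap ψ χ h).toK = ψ h.toK := rfl

lemma liftedMap_ofK (ψ : KGrp g n k → KGrp g n k) (χ : KGrp g n k → kˣ)
    (v : KGrp g n k) : liftedMap ψ χ (ofK v) = ⟨χ v, (ψ v).1, (ψ v).2⟩ := by
  ext <;> simp [liftedMap]

lemma liftedMap_inj {ψ ψ' : KGrp g n k → KGrp g n k} {χ χ' : KGrp g n k → kˣ} :
    liftedMap ψ χ = liftedMap ψ' χ' ↔ ψ = ψ' ∧ χ = χ' := by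
  refine ⟨fun h => ?_, fun ⟨hψ, hχ⟩ => hψ ▸ hχ ▸ rfl⟩
  have hv (v : KGrp g n k) := congrFun h (ofK v)
  simp only [liftedMap_ofK, Heis.mk.injEq] at hv
  exact ⟨funext fun v => Prod.ext (hv v).2.1 (hv v).2.2, funext fun v => (hv v).1⟩

lemma liftedMap_leftInverse (ψ : KGrp g n k ≃ KGrp g n k) (χ : KGrp g n k → kˣ) :
    Function.LeftInverse (liftedMap ψ.symm fun v => (χ (ψ.symm v))⁻¹) (liftedMap ψ χ) :=
  fun h => ext_toK (by simp [mul_assoc]) (by simp)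

lemma liftedMap_bijective (ψ : KGrp g n k ≃ KGrp g n k) (χ : KGrp g n k → kˣ) :
    Function.Bijective (liftedMap ψ χ) := by
  refine Function.bijective_iff_has_inverse.mpr ⟨_, liftedMap_leftInverse ψ χ, fun h => ?_⟩
  simpa using liftedMap_leftInverse ψ.symm (fun v => (χ (ψ.symm v))⁻¹) h

lemma liftedMap_center {ψ : KGrp g n k → KGrp g n k} {χ : KGrp g n k → kˣ}
    (hψ : ψ 0 = 0) (hχ : χ 0 = 1) (u : kˣ) :
    liftedMap ψ χ ⟨u, 0, 0⟩ = ⟨u, 0, 0⟩ :=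
  ext_toK (by simp [hχ]) (by simp [hψ])

theorem liftedMap_mul_iff_isSemiChar (ψ : F) (χ : KGrp g n k → kˣ) :
    (∀ a b : Heis g n k, liftedMap ψ χ (a * b) = liftedMap ψ χ a * liftedMap ψ χ b) ↔
      IsSemiChar ψ χ := by
  constructor
  · intro H v w
    have ht := congrArg Heis.t (H (ofK v) (ofK w))
    simp only [liftedMap_ofK, Heis.mul_t, liftedMap_t, toK_mul, toK_ofK, ofK_t, ofK_x, ofK_y,
      one_mul, mul_one] at ht
    rw [eq_mul_inv_iff_mul_eq, mul_comm, ht]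
  · intro H a b
    refine ext_toK ?_ (by simp [toK_mul])
    simp only [Heis.mul_t, liftedMap_t, toK_mul, H a.toK b.toK]
    simp [liftedMap, toK, mul_comm, mul_left_comm, mul_assoc]

lemma liftedMap_comm_Dneg_iff (ψ : F) (χ : KGrp g n k → kˣ) :
    (∀ h : Heis g n k, liftedMap ψ χ (Dneg h) = Dneg (liftedMap ψ χ h)) ↔ IsSymmChar χ := by
  constructor
  · intro H v
    simpa using congrArg Heis.t (H (ofK v))
  · intro H h
    exact ext_toK (by simp [H h.toK]) (by simp [map_neg ψ h.toK])

end liftedMap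

namespace IsSemiChar

variable {ψ : KGrp g n k → KGrp g n k} {χ : KGrp g n k → kˣ}

lemma map_zero (hψ : ψ 0 = 0) (hχ : IsSemiChar ψ χ) : χ 0 = 1 := by
  have h := hχ 0 0
  -- `simp` cannot use `add_zero` here: the `0` of `AddChar` is not reducibly the `0` of its
  -- additive group structure.
  rw [add_zero (0 : KGrp g n k), hψ] at h
  simpa using h

lemma en_map (hχ : IsSemiChar ψ χ) (v w : KGrp g n k) : en (ψ v) (ψ w) = en v w := by
  have h := (hχ v w).symm.trans (add_comm v w ▸ hχ w v)
  rw [mul_comm (χ w)] at h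
  simp only [mul_assoc, mul_right_inj, mul_inv_eq_mul_inv_iff_mul_eq_mul] at h
  rw [en, en, mul_inv_eq_mul_inv_iff_mul_eq_mul, ← h, mul_comm]

end IsSemiChar

section Induced

variable {F : Type*} [FunLike F (Heis g n k) (Heis g n k)]

def inducedK (f : F) (v : KGrp g n k) : KGrp g n k := (f (ofK v)).toK

def inducedChar (f : F) (v : KGrp g n k) : kˣ := (f (ofK v)).t

variable [MonoidHomClass F (Heis g n k) (Heis g n k)] {f : F}

lemma eq_liftedMap_of_map_center (hf : ∀ u : kˣ, f ⟨u, 0, 0⟩ = ⟨u, 0, 0⟩) (h : Heis g n k) :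
    f h = liftedMap (inducedK f) (inducedChar f) h := by
  conv_lhs => rw [mk_eq_center_mul_ofK h, map_mul, hf]
  refine ext_toK ?_ ((toK_mul _ _).trans (zero_add (f (ofK h.toK)).toK))
  simp [inducedChar]

lemma toK_map_of_map_center (hf : ∀ u : kˣ, f ⟨u, 0, 0⟩ = ⟨u, 0, 0⟩) (h : Heis g n k) :
    (f h).toK = inducedK f h.toK := by
  rw [eq_liftedMap_of_map_center hf, liftedMap_toK]

lemma inducedK_add (hf : ∀ u : kˣ, f ⟨u, 0, 0⟩ = ⟨u, 0, 0⟩) (v w : KGrp g n k) :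
    inducedK f (v + w) = inducedK f v + inducedK f w := by
  calc inducedK f (v + w) = (f (ofK v * ofK w)).toK :=
        (toK_map_of_map_center hf (ofK v * ofK w)).symm
    _ = inducedK f v + inducedK f w := by rw [map_mul, toK_mul]; rfl

end Induced

section Automorphism

variable {f : Heis g n k ≃* Heis g n k}

lemma symm_map_center (hf : ∀ u : kˣ, f ⟨u, 0, 0⟩ = ⟨u, 0, 0⟩) (u : kˣ) :
    f.symm ⟨u, 0, 0⟩ = ⟨u, 0, 0⟩ :=
  f.symm_apply_eq.mpr (hf u).symm

lemma inducedK_symm_inducedK (hf : ∀ u : kˣ, f ⟨u, 0, 0⟩ = ⟨u, 0, 0⟩) (v : KGrp g n k) :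
    inducedK f.symm (inducedK f v) = v := by
  calc inducedK f.symm (f (ofK v)).toK = (f.symm (f (ofK v))).toK :=
        (toK_map_of_map_center (symm_map_center hf) _).symm
    _ = v := by rw [f.symm_apply_apply, toK_ofK]

def inducedAddEquiv (f : Heis g n k ≃* Heis g n k) (hf : ∀ u : kˣ, f ⟨u, 0, 0⟩ = ⟨u, 0, 0⟩) :
    KGrp g n k ≃+ KGrp g n k where
  toFun := inducedK f
  invFun := inducedK f.symm
  left_inv := inducedK_symm_inducedK hf
  right_inv := inducedK_symm_inducedK (f := f.symm) (symm_map_center hf)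
  map_add' := inducedK_add hf

theorem existsUnique_isSemiChar_eq_liftedMap (hf : ∀ u : kˣ, f ⟨u, 0, 0⟩ = ⟨u, 0, 0⟩) :
    ∃! p : (KGrp g n k ≃+ KGrp g n k) × (KGrp g n k → kˣ),
      IsSemiChar (⇑p.1) p.2 ∧ ∀ h : Heis g n k, f h = liftedMap (⇑p.1) p.2 h := by
  have hfac : ⇑f = liftedMap (inducedAddEquiv f hf) (inducedChar f) :=
    funext (eq_liftedMap_of_map_center hf)
  have hχ : IsSemiChar (inducedAddEquiv f hf) (inducedChar f) :=
    (liftedMap_mul_iff_isSemiChar (inducedAddEquiv f hf) _).mp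
      fun a b => by rw [← hfac]; exact map_mul f a b
  refine ⟨(inducedAddEquiv f hf, inducedChar f), ⟨hχ, congrFun hfac⟩, ?_⟩
  rintro ⟨ψ, χ⟩ ⟨-, hfψ⟩
  obtain ⟨hψ, hχ'⟩ := liftedMap_inj.mp ((funext hfψ).symm.trans hfac)
  exact Prod.ext (DFunLike.coe_injective hψ) hχ'

end Automorphism

theorem heisenberg_automorphisms_via_semicharacters_general (g n : ℕ)
    (k : Type*) [Field k]
    (ψb : KGrp g n k ≃+ KGrp g n k) (χ : KGrp g n k → kˣ) :
    -- (i)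
    ((∀ a b : Heis g n k,
        liftedMap (⇑ψb) χ (a * b) = liftedMap (⇑ψb) χ a * liftedMap (⇑ψb) χ b) ↔
      IsSemiChar (⇑ψb) χ) ∧
    -- (ii)
    ((∀ a b : Heis g n k,
        liftedMap (⇑ψb) χ (a * b) = liftedMap (⇑ψb) χ a * liftedMap (⇑ψb) χ b) →
      (IsSymplectic ψb ∧ Function.Bijective (liftedMap (⇑ψb) χ) ∧
        (∀ u : kˣ, liftedMap (⇑ψb) χ ⟨u, 0, 0⟩ = ⟨u, 0, 0⟩) ∧
        (∀ h : Heis g n k, (liftedMap (⇑ψb) χ h).toK = ψb h.toK))) ∧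
    -- (iii)
    ((∀ h : Heis g n k,
        liftedMap (⇑ψb) χ (Heis.Dneg h) = Heis.Dneg (liftedMap (⇑ψb) χ h)) ↔
      IsSymmChar χ) ∧
    -- (iv)
    (∀ f : Heis g n k ≃* Heis g n k, (∀ u : kˣ, f ⟨u, 0, 0⟩ = ⟨u, 0, 0⟩) →
      ∃! p : (KGrp g n k ≃+ KGrp g n k) × (KGrp g n k → kˣ),
        IsSemiChar (⇑p.1) p.2 ∧ ∀ h : Heis g n k, f h = liftedMap (⇑p.1) p.2 h) := by
  have hmul := liftedMap_mul_iff_isSemiChar ψb χ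
  refine ⟨hmul, fun H => ?_, liftedMap_comm_Dneg_iff ψb χ,
    fun _ => existsUnique_isSemiChar_eq_liftedMap⟩
  have hχ := hmul.mp H
  exact ⟨hχ.en_map, liftedMap_bijective ψb.toEquiv χ,
    liftedMap_center (map_zero ψb) (hχ.map_zero (map_zero ψb)), fun _ => rfl⟩

/-- automorphisms of the Heisenberg group fixing the center
correspond to pairs `(ψ̄, χ)` of a symplectic automorphism and a
`ψ̄`-semi-character. -/
theorem heisenberg_automorphisms_via_semicharacters (g n : ℕ) (hg : 1 ≤ g) (hn : 1 ≤ n)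
    (k : Type*) [Field k]
    (ψb : KGrp g n k ≃+ KGrp g n k) (χ : KGrp g n k → kˣ) :
    -- (i)
    ((∀ a b : Heis g n k,
        liftedMap (⇑ψb) χ (a * b) = liftedMap (⇑ψb) χ a * liftedMap (⇑ψb) χ b) ↔
      IsSemiChar (⇑ψb) χ) ∧
    -- (ii)
    ((∀ a b : Heis g n k,
        liftedMap (⇑ψb) χ (a * b) = liftedMap (⇑ψb) χ a * liftedMap (⇑ψb) χ b) →
      (IsSymplectic ψb ∧ Function.Bijective (liftedMap (⇑ψb) χ) ∧
        (∀ u : kˣ, liftedMap (⇑ψb) χ ⟨u, 0, 0⟩ = ⟨u, 0, 0⟩) ∧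
        (∀ h : Heis g n k, (liftedMap (⇑ψb) χ h).toK = ψb h.toK))) ∧
    -- (iii)
    ((∀ h : Heis g n k,
        liftedMap (⇑ψb) χ (Heis.Dneg h) = Heis.Dneg (liftedMap (⇑ψb) χ h)) ↔
      IsSymmChar χ) ∧
    -- (iv)
    (∀ f : Heis g n k ≃* Heis g n k, (∀ u : kˣ, f ⟨u, 0, 0⟩ = ⟨u, 0, 0⟩) →
      ∃! p : (KGrp g n k ≃+ KGrp g n k) × (KGrp g n k → kˣ),
        IsSemiChar (⇑p.1) p.2 ∧ ∀ h : Heis g n k, f h = liftedMap (⇑p.1) p.2 h) :=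
  heisenberg_automorphisms_via_semicharacters_general g n k ψb χ

end ThetaPaper
end

section
/- Assume char k ≠ 2 and that every element of kˣ is a square (e.g. k algebraically closed). Let ℓ be an odd positive integer and x ∈ K(n). Then the ℓ-th power map carries the set of symmetric elements of G(n) over x onto the set of symmetric elements over ℓ·x: for every symmetric h ∈ G(n) with π(h) = ℓ·x there exists a symmetric g ∈ G(n) with π(g) = x and g^ℓ = h. Consequently, for every symmetric level subgroup H̃ ⊆ G(n) and every x ∈ K(n) with ε(x,H̃) finite and odd, x is symmetric compatible with H̃. -/
namespace ThetaPaper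

variable {g n : ℕ} {k : Type*} [Field k]

lemma Heis.pow_spec (h : Heis g n k) (m : ℕ) :
    h ^ m = ⟨h.t ^ m * (h.y h.x) ^ m.choose 2, m • h.x, m • h.y⟩ := by
  induction m with
  | zero => refine Heis.ext ?_ ?_ ?_ <;> simp [zero_nsmul]
  | succ p ih =>
      rw [pow_succ, ih]
      refine Heis.ext ?_ ?_ ?_
      · show h.t ^ p * h.y h.x ^ p.choose 2 * h.t * h.y (p • h.x) = _
        rw [AddChar.map_nsmul_eq_pow, Nat.choose_succ_succ,
          Nat.choose_one_right, pow_succ, pow_add]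
        simp only [mul_comm, mul_assoc, mul_left_comm]
      · exact (succ_nsmul _ _).symm
      · exact (succ_nsmul _ _).symm

lemma Heis.isSymElem_iff (h : Heis g n k) :
    h.IsSymElem ↔ h.t * h.t = h.y h.x := by
  constructor
  · intro hs
    have h1 := congrArg Heis.t hs
    simp only [Dneg, inv_t] at h1
    have h2 : h.t * h.t = h.t * (h.t⁻¹ * h.y h.x) := by rw [← h1]
    rw [h2, mul_inv_cancel_left]
  · intro hs
    refine Heis.ext ?_ ?_ ?_
    · show h.t = h.t⁻¹ * h.y h.x
      rw [← hs, inv_mul_cancel_left]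
    · rfl
    · rfl

lemma choose_two_odd (m : ℕ) : (2 * m + 1).choose 2 = 2 * m * m + m := by
  rw [Nat.choose_two_right]
  have : (2 * m + 1) * (2 * m + 1 - 1) = 2 * (2 * m * m + m) := by
    rw [Nat.add_sub_cancel]; ring
  rw [this, Nat.mul_div_cancel_left _ (by norm_num)]

/-- Key step: the `ℓ`-th power map is onto from symmetric elements over `x`
to symmetric elements over `ℓ • x`, for odd `ℓ`. -/
lemma key (k : Type*) [Field k] (hsq : ∀ a : kˣ, IsSquare a)
    (ℓ : ℕ) (hℓodd : Odd ℓ) (x : KGrp g n k) :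
    ∀ h : Heis g n k, Heis.IsSymElem h → h.toK = ℓ • x →
      ∃ g0 : Heis g n k, Heis.IsSymElem g0 ∧ g0.toK = x ∧ g0 ^ ℓ = h := by
  intro h hsym htoK
  obtain ⟨m, hm⟩ := hℓodd
  have hx : h.x = ℓ • x.1 := congrArg Prod.fst htoK
  have hy : h.y = ℓ • x.2 := congrArg Prod.snd htoK
  set u : kˣ := x.2 x.1 with hu
  have hsym' : h.t * h.t = u ^ (ℓ * ℓ) := by
    rw [Heis.isSymElem_iff] at hsym
    rw [hsym, hx, hy, AddChar.nsmul_apply, AddChar.map_nsmul_eq_pow, ← pow_mul]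
  obtain ⟨r, hr⟩ := hsq u
  have hrr : r ^ (ℓ * ℓ) * r ^ (ℓ * ℓ) = h.t * h.t := by
    rw [← mul_pow, ← hr, hsym']
  -- pick the sign of the square root
  have hcases : r ^ (ℓ * ℓ) = h.t ∨ r ^ (ℓ * ℓ) = -h.t := by
    have := (mul_self_eq_mul_self_iff (a := ((r ^ (ℓ * ℓ) : kˣ) : k)) (b := ((h.t : kˣ) : k))).mp
      (by exact_mod_cast congrArg Units.val hrr)
    rcases this with h1 | h1
    · exact Or.inl (Units.ext (by exact_mod_cast h1))
    · exact Or.inr (Units.ext (by push_cast; exact_mod_cast h1))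
  have hodd : Odd (ℓ * ℓ) := ⟨2 * m * m + 2 * m, by rw [hm]; ring⟩
  obtain ⟨s, hs2, hst⟩ : ∃ s : kˣ, s * s = u ∧ s ^ (ℓ * ℓ) = h.t := by
    rcases hcases with h1 | h1
    · exact ⟨r, hr.symm, h1⟩
    · exact ⟨-r, by rw [neg_mul_neg]; exact hr.symm,
        by rw [hodd.neg_pow, h1, neg_neg]⟩
  refine ⟨⟨s, x.1, x.2⟩, ?_, rfl, ?_⟩
  · rw [Heis.isSymElem_iff]; exact hs2
  · rw [Heis.pow_spec]
    refine Heis.ext ?_ ?_ ?_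
    · show s ^ ℓ * (x.2 x.1) ^ ℓ.choose 2 = h.t
      rw [← hu, ← hs2, ← pow_two, ← pow_mul, ← pow_add, ← hst]
      congr 1
      rw [hm, choose_two_odd]
      ring
    · exact hx.symm
    · exact hy.symm

/-- for odd `ℓ`, the `ℓ`-th power map is onto from symmetric elements
over `x` to symmetric elements over `ℓ·x`; consequently any point whose index
`ε(x,H̃)` with respect to a symmetric level subgroup `H̃` is finite and odd is
symmetric compatible with `H̃`. -/
theorem odd_power_symmetric_onto (g n : ℕ) (hg : 1 ≤ g) (hn : 1 ≤ n)
    (k : Type*) [Field k] (h2 : (2 : k) ≠ 0) (hsq : ∀ a : kˣ, IsSquare a)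
    (ℓ : ℕ) (hℓpos : 0 < ℓ) (hℓodd : Odd ℓ) (x : KGrp g n k) :
    (∀ h : Heis g n k, Heis.IsSymElem h → h.toK = ℓ • x →
      ∃ g0 : Heis g n k, Heis.IsSymElem g0 ∧ g0.toK = x ∧ g0 ^ ℓ = h) ∧
    (∀ H : Subgroup (Heis g n k), (∀ h ∈ H, Heis.IsSymElem h) →
      Set.InjOn Heis.toK (H : Set (Heis g n k)) →
      ∀ (x' : KGrp g n k) (ε : ℕ), 0 < ε → Odd ε →
        ε • x' ∈ Heis.toK '' (H : Set (Heis g n k)) →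
        (∀ l : ℕ, 0 < l → l • x' ∈ Heis.toK '' (H : Set (Heis g n k)) → ε ≤ l) →
        ∃ h : Heis g n k, Heis.IsSymElem h ∧ h.toK = x' ∧ h ^ ε ∈ H) := by
  constructor
  · exact key k hsq ℓ hℓodd x
  · intro H hHsym _hinj x' ε _hεpos hεodd hmem _hmin
    obtain ⟨h0, hh0H, hh0K⟩ := hmem
    obtain ⟨g0, hg0sym, hg0K, hg0pow⟩ :=
      key k hsq ε hεodd x' h0 (hHsym h0 hh0H) hh0K
    exact ⟨g0, hg0sym, hg0K, by rw [hg0pow]; exact hh0H⟩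

end ThetaPaper
end

section
/- Assume char k ≠ 2 and that every element of kˣ is a square (e.g. k algebraically closed). Let H̃ ⊆ G(n) be a symmetric level subgroup and let x₁, x₂ ∈ K(n) satisfy e_n(x₁,x₂) = 1 and ε(x₁,H̃) = ε(x₂,H̃) = ε(x₁+x₂,H̃) = ε (all finite). Then κ₀(x₁+x₂, H̃) = κ₀(x₁,H̃)·κ₀(x₂,H̃); that is, x₁+x₂ is symmetric compatible with H̃ if and only if x₁ and x₂ are either both symmetric compatible or both not symmetric compatible with H̃. -/
namespace ThetaPaper

variable {g n : ℕ} {k : Type*} [Field k]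

/-- `H̃` is a symmetric level subgroup of `G(n)`: all its elements are symmetric
and `π` restricted to it is injective. -/
def IsSymLevelSubgroup (H : Subgroup (Heis g n k)) : Prop :=
  (∀ h ∈ H, Heis.IsSymElem h) ∧ Set.InjOn Heis.toK (H : Set (Heis g n k))

/-- `ε = ε(x,H̃) = min {ℓ ≥ 1 : ℓ·x ∈ π(H̃)}`. -/
def IsIndexOf (H : Subgroup (Heis g n k)) (x : KGrp g n k) (ε : ℕ) : Prop :=
  0 < ε ∧ ε • x ∈ Heis.toK '' (H : Set (Heis g n k)) ∧
    ∀ ℓ : ℕ, 0 < ℓ → ℓ • x ∈ Heis.toK '' (H : Set (Heis g n k)) → ε ≤ ℓ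

/-- `x` is symmetric compatible with `H̃` (with `ε = ε(x,H̃)`): some symmetric
lift `h` of `x` satisfies `h^ε ∈ H̃`. -/
def SymCompat (H : Subgroup (Heis g n k)) (x : KGrp g n k) (ε : ℕ) : Prop :=
  ∃ h : Heis g n k, Heis.IsSymElem h ∧ h.toK = x ∧ h ^ ε ∈ H


section Aux

lemma choose_aux (e : ℕ) : e + 2 * e.choose 2 = e * e := by
  induction e with
  | zero => rfl
  | succ p ih =>
    have h : (p+1).choose 2 = p + p.choose 2 := by
      rw [Nat.choose_succ_succ, Nat.choose_one_right]
    have h2 : (p+1) * (p+1) = p * p + 2*p + 1 := by ring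
    omega

lemma choose_aux2 (m : ℕ) : m + (2*m).choose 2 = m * (2*m) := by
  have h1 := choose_aux (2*m)
  have h2 : (2*m) * (2*m) = 2 * (m * (2*m)) := by ring
  omega

variable {k : Type*} [Field k]

lemma neg_ne_self (h2 : (2:k) ≠ 0) (u : kˣ) : (-u : kˣ) ≠ u := by
  intro h
  have hk : (-(u:k)) = (u:k) := by exact_mod_cast congrArg Units.val h
  have : (2:k) * u = 0 := by linear_combination -hk
  exact (mul_ne_zero h2 u.ne_zero) this

lemma sq_eq_cases {c A : kˣ} (h : c * c = A * A) : c = A ∨ c = -A := by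
  have hk : (c:k) * (c:k) = (A:k) * (A:k) := by exact_mod_cast congrArg Units.val h
  rcases mul_self_eq_mul_self_iff.mp hk with h' | h'
  · exact Or.inl (Units.ext h')
  · right; exact Units.ext (by push_cast; exact h')

lemma sign_mul_iff {c₁ c₂ A B : kˣ} (h2 : (2:k) ≠ 0)
    (h₁ : c₁ = A ∨ c₁ = -A) (h₂ : c₂ = B ∨ c₂ = -B) :
    (c₁ * c₂ = A * B ↔ (c₁ = A ↔ c₂ = B)) := by
  have hA := neg_ne_self h2 A
  have hB := neg_ne_self h2 B
  have hAB := neg_ne_self h2 (A*B)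
  rcases h₁ with rfl | rfl <;> rcases h₂ with rfl | rfl <;>
    simp_all [mul_neg, neg_mul, neg_neg, eq_comm]

end Aux

namespace Heis

lemma pow_x' (h : Heis g n k) (m : ℕ) : (h ^ m).x = m • h.x := by
  induction m with
  | zero => simp [zero_nsmul]
  | succ p ih => rw [pow_succ, mul_x, ih, succ_nsmul]

lemma pow_y' (h : Heis g n k) (m : ℕ) : (h ^ m).y = m • h.y := by
  induction m with
  | zero => simp [zero_nsmul]
  | succ p ih => rw [pow_succ, mul_y, ih, succ_nsmul]

lemma pow_t' (h : Heis g n k) (m : ℕ) :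
    (h ^ m).t = h.t ^ m * (h.y h.x) ^ (m.choose 2) := by
  induction m with
  | zero => simp
  | succ p ih =>
    rw [pow_succ, mul_t, ih, pow_x', AddChar.map_nsmul_eq_pow]
    have h2 : (p+1).choose 2 = p + p.choose 2 := by
      rw [Nat.choose_succ_succ, Nat.choose_one_right]
    rw [h2]
    exact Units.ext (by push_cast; ring)

lemma toK_pow (h : Heis g n k) (m : ℕ) : (h ^ m).toK = m • h.toK := by
  show ((h ^ m).x, (h ^ m).y) = (m • h.x, m • h.y)
  rw [pow_x', pow_y']

lemma isSymElem_iff_s9 (h : Heis g n k) : IsSymElem h ↔ h.t * h.t = h.y h.x := by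
  constructor
  · intro he
    have ht : (Dneg h).t = h⁻¹.t := congrArg Heis.t he
    simp only [Dneg, inv_t] at ht
    rw [eq_inv_mul_iff_mul_eq] at ht
    exact ht
  · intro ht
    apply Heis.ext
    · show h.t = h.t⁻¹ * h.y h.x
      rw [← ht, inv_mul_cancel_left]
    · rfl
    · rfl

end Heis

section Key

variable {k : Type*} [Field k]

lemma symCompat_iff_even (hsq : ∀ a : kˣ, IsSquare a)
    {H : Subgroup (Heis g n k)} (hH : IsSymLevelSubgroup H)
    (x : KGrp g n k) (m : ℕ)
    {w : Heis g n k} (hw : w ∈ H) (hwk : w.toK = (2*m) • x) :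
    SymCompat H x (2*m) ↔ w.t = (x.2 x.1) ^ (m * (2*m)) := by
  have hwx : w.x = (2*m) • x.1 := congrArg Prod.fst hwk
  have hwy : w.y = (2*m) • x.2 := congrArg Prod.snd hwk
  constructor
  · rintro ⟨h, hsym, hk, hmem⟩
    have hx : h.x = x.1 := congrArg Prod.fst hk
    have hy : h.y = x.2 := congrArg Prod.snd hk
    have huniq : h ^ (2*m) = w :=
      hH.2 hmem hw (by rw [Heis.toK_pow, hk, ← hwk])
    have hts : h.t * h.t = x.2 x.1 := by
      rw [← hx, ← hy]; exact (Heis.isSymElem_iff_s9 h).mp hsym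
    rw [← huniq, Heis.pow_t', hx, hy, pow_mul, pow_two, hts, ← pow_add,
      choose_aux2]
  · intro hwt
    obtain ⟨r, hr⟩ := hsq (x.2 x.1)
    refine ⟨⟨r, x.1, x.2⟩, (Heis.isSymElem_iff_s9 _).mpr hr.symm, rfl, ?_⟩
    have hthis : (⟨r, x.1, x.2⟩ : Heis g n k) ^ (2*m) = w := by
      apply Heis.ext
      · rw [Heis.pow_t']
        show r ^ (2*m) * (x.2 x.1) ^ ((2*m).choose 2) = w.t
        rw [pow_mul, pow_two, ← hr, ← pow_add, choose_aux2, ← hwt]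
      · rw [Heis.pow_x']
        exact hwx.symm
      · rw [Heis.pow_y']
        exact hwy.symm
    rw [hthis]; exact hw

lemma symCompat_of_odd (hsq : ∀ a : kˣ, IsSquare a)
    {H : Subgroup (Heis g n k)} (hH : IsSymLevelSubgroup H)
    (x : KGrp g n k) (m : ℕ)
    {w : Heis g n k} (hw : w ∈ H) (hwk : w.toK = (2*m+1) • x) :
    SymCompat H x (2*m+1) := by
  set e := 2*m+1 with he
  have hodd : Odd (e * e) := Odd.mul ⟨m, rfl⟩ ⟨m, rfl⟩
  have hwx : w.x = e • x.1 := congrArg Prod.fst hwk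
  have hwy : w.y = e • x.2 := congrArg Prod.snd hwk
  obtain ⟨r, hr⟩ := hsq (x.2 x.1)
  have hwsym : w.t * w.t = w.y w.x := (Heis.isSymElem_iff_s9 w).mp (hH.1 w hw)
  have hval : w.y w.x = r ^ (e*e) * r ^ (e*e) := by
    rw [hwy, hwx, AddChar.nsmul_apply, AddChar.map_nsmul_eq_pow, ← pow_mul, hr,
      mul_pow]
  have hcases : w.t = r ^ (e*e) ∨ w.t = -(r ^ (e*e)) :=
    sq_eq_cases (by rw [hwsym, hval])
  have key : ∀ s : kˣ, s * s = x.2 x.1 → s ^ (e*e) = w.t → SymCompat H x e := by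
    intro s hs hst
    refine ⟨⟨s, x.1, x.2⟩, (Heis.isSymElem_iff_s9 _).mpr hs, rfl, ?_⟩
    have hthis : (⟨s, x.1, x.2⟩ : Heis g n k) ^ e = w := by
      apply Heis.ext
      · rw [Heis.pow_t']
        show s ^ e * (x.2 x.1) ^ (e.choose 2) = w.t
        rw [← hs, ← pow_two, ← pow_mul, ← pow_add, choose_aux, hst]
      · rw [Heis.pow_x']
        exact hwx.symm
      · rw [Heis.pow_y']
        exact hwy.symm
    rw [hthis]; exact hw
  rcases hcases with hc | hc
  · exact key r hr.symm hc.symm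
  · refine key (-r) (by rw [neg_mul_neg, ← hr]) ?_
    rw [hodd.neg_pow, hc]

end Key

open Classical in
/-- additivity of symmetric compatibility,
`κ₀(x₁+x₂,H̃) = κ₀(x₁,H̃)·κ₀(x₂,H̃)`, for `e_n`-orthogonal points with the same
index `ε`. -/
theorem symcompat_additive (g n : ℕ) (hg : 1 ≤ g) (hn : 1 ≤ n)
    (k : Type*) [Field k] (h2 : (2 : k) ≠ 0) (hsq : ∀ a : kˣ, IsSquare a)
    (H : Subgroup (Heis g n k)) (hH : IsSymLevelSubgroup H)
    (x₁ x₂ : KGrp g n k) (hpair : en x₁ x₂ = 1) (ε : ℕ)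
    (hε₁ : IsIndexOf H x₁ ε) (hε₂ : IsIndexOf H x₂ ε)
    (hε₁₂ : IsIndexOf H (x₁ + x₂) ε) :
    ((if SymCompat H (x₁ + x₂) ε then (1 : ℤ) else -1) =
       (if SymCompat H x₁ ε then (1 : ℤ) else -1) *
       (if SymCompat H x₂ ε then (1 : ℤ) else -1)) ∧
    (SymCompat H (x₁ + x₂) ε ↔ (SymCompat H x₁ ε ↔ SymCompat H x₂ ε)) := by
  obtain ⟨-, ⟨w₁, hw₁, hw₁k⟩, -⟩ := hε₁
  obtain ⟨-, ⟨w₂, hw₂, hw₂k⟩, -⟩ := hε₂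
  have hx1 : w₁.x = ε • x₁.1 := congrArg Prod.fst hw₁k
  have hy1 : w₁.y = ε • x₁.2 := congrArg Prod.snd hw₁k
  have hx2 : w₂.x = ε • x₂.1 := congrArg Prod.fst hw₂k
  have hy2 : w₂.y = ε • x₂.2 := congrArg Prod.snd hw₂k
  have hw12 : w₁ * w₂ ∈ H := mul_mem hw₁ hw₂
  have hw12k : (w₁ * w₂).toK = ε • (x₁ + x₂) := by
    have hyadd : ε • (x₁.2 + x₂.2) = ε • x₁.2 + ε • x₂.2 := by
      ext z; simp [mul_pow]
    show ((w₁*w₂).x, (w₁*w₂).y) = (ε • (x₁.1 + x₂.1), ε • (x₁.2 + x₂.2))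
    rw [Heis.mul_x, Heis.mul_y, hx1, hx2, hy1, hy2, nsmul_add, hyadd]
  have hq : x₁.2 x₂.1 = x₂.2 x₁.1 := by
    have h := hpair
    unfold en at h
    rwa [mul_inv_eq_one] at h
  rcases Nat.even_or_odd ε with hev | hod
  · obtain ⟨m, hm⟩ := hev
    have hm' : ε = 2 * m := by omega
    subst hm'
    have e1 := symCompat_iff_even hsq hH x₁ m hw₁ hw₁k
    have e2 := symCompat_iff_even hsq hH x₂ m hw₂ hw₂k
    have e12 := symCompat_iff_even hsq hH (x₁ + x₂) m hw12 hw12k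
    set A := (x₁.2 x₁.1) ^ (m * (2*m)) with hA
    set B := (x₂.2 x₂.1) ^ (m * (2*m)) with hB
    have hval12 : ((x₁+x₂).2 ((x₁+x₂).1)) =
        x₁.2 x₁.1 * x₂.2 x₂.1 * (x₂.2 x₁.1) ^ 2 := by
      show (x₁.2 + x₂.2) (x₁.1 + x₂.1) = _
      rw [AddChar.add_apply, AddChar.map_add_eq_mul, AddChar.map_add_eq_mul, hq]
      exact Units.ext (by push_cast; ring)
    have hlhs : (w₁*w₂).t = w₁.t * w₂.t * (x₂.2 x₁.1) ^ ((2*m)*(2*m)) := by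
      rw [Heis.mul_t, hy2, hx1, AddChar.nsmul_apply, AddChar.map_nsmul_eq_pow,
        ← pow_mul]
    have key : SymCompat H (x₁+x₂) (2*m) ↔ w₁.t * w₂.t = A * B := by
      rw [e12, hlhs, hval12]
      have hrhs : (x₁.2 x₁.1 * x₂.2 x₂.1 * (x₂.2 x₁.1) ^ 2) ^ (m * (2*m)) =
          A * B * (x₂.2 x₁.1) ^ ((2*m)*(2*m)) := by
        rw [mul_pow, mul_pow, ← pow_mul, hA, hB]
        have hexp : 2 * (m * (2*m)) = (2*m) * (2*m) := by ring
        rw [hexp]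
      rw [hrhs, mul_left_inj]
    have hc1 : w₁.t = A ∨ w₁.t = -A := by
      refine sq_eq_cases ?_
      have hwsym : w₁.t * w₁.t = w₁.y w₁.x := (Heis.isSymElem_iff_s9 w₁).mp (hH.1 w₁ hw₁)
      rw [hwsym, hy1, hx1, AddChar.nsmul_apply, AddChar.map_nsmul_eq_pow, ← pow_mul,
        hA, ← pow_add]
      have hexp : (2*m) * (2*m) = m * (2*m) + m * (2*m) := by ring
      rw [hexp]
    have hc2 : w₂.t = B ∨ w₂.t = -B := by
      refine sq_eq_cases ?_
      have hwsym : w₂.t * w₂.t = w₂.y w₂.x := (Heis.isSymElem_iff_s9 w₂).mp (hH.1 w₂ hw₂)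
      rw [hwsym, hy2, hx2, AddChar.nsmul_apply, AddChar.map_nsmul_eq_pow, ← pow_mul,
        hB, ← pow_add]
      have hexp : (2*m) * (2*m) = m * (2*m) + m * (2*m) := by ring
      rw [hexp]
    have main : SymCompat H (x₁+x₂) (2*m) ↔
        (SymCompat H x₁ (2*m) ↔ SymCompat H x₂ (2*m)) := by
      rw [key, e1, e2]
      exact sign_mul_iff h2 hc1 hc2
    refine ⟨?_, main⟩
    by_cases s1 : SymCompat H x₁ (2*m) <;> by_cases s2 : SymCompat H x₂ (2*m) <;>
      simp [main, s1, s2]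
  · obtain ⟨m, hm⟩ := hod
    subst hm
    have s1 := symCompat_of_odd hsq hH x₁ m hw₁ hw₁k
    have s2 := symCompat_of_odd hsq hH x₂ m hw₂ hw₂k
    have s12 := symCompat_of_odd hsq hH (x₁ + x₂) m hw12 hw12k
    exact ⟨by simp [s1, s2, s12], by simp [s1, s2, s12]⟩


end ThetaPaper
end

section
/- The maps E_d(m) : G(m) → G(n), (ℓ,x,y) ↦ (ℓ^d, μ_{m,n}(x), ν̂_{m,n}(y)); H_d(n) : G(n) → G(m), (ℓ,x,y) ↦ (ℓ^d, ν_{n,m}(x), μ̂_{n,m}(y)); and D_d(m) : G(m) → G(m), (ℓ,x,y) ↦ (ℓ^{d²}, d·x, d·y) are group homomorphisms of Heisenberg groups, and they satisfy H_d(n) ∘ E_d(m) = D_d(m) and E_d(m) ∘ H_d(n) = D_d(n). -/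
namespace ThetaPaper

variable {g n : ℕ} {k : Type*} [Field k]

/-- `μ` on one coordinate: the canonical injection `(1/m)ℤ/ℤ → (1/n)ℤ/ℤ`,
which in `ℤ/Nℤ` (numerator) coordinates is the additive map `ℤ/mℤ → ℤ/nℤ`
sending `1` to `d`. -/
def muZMod (m n d : ℕ) (hmd : n = m * d) : ZMod m →+ ZMod n :=
  ZMod.lift m ⟨zmultiplesHom (ZMod n) (d : ZMod n), by
    simp only [zmultiplesHom_apply]
    rw [zsmul_eq_mul]
    push_cast
    rw [← Nat.cast_mul, ← hmd, ZMod.natCast_self]⟩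

/-- `ν` on one coordinate: the map `(1/n)ℤ/ℤ → (1/m)ℤ/ℤ`, `x ↦ d·x`, which in
numerator coordinates is reduction `ℤ/nℤ → ℤ/mℤ`. -/
def nuZMod (m n d : ℕ) (hmd : n = m * d) : ZMod n →+ ZMod m :=
  (ZMod.castHom ⟨d, hmd⟩ (ZMod m)).toAddMonoidHom

/-- The canonical injection `μ_{m,n} : Z(m) → Z(n)`. -/
def muMap (g m n d : ℕ) (hmd : n = m * d) : ZGrp g m →+ ZGrp g n :=
  (muZMod m n d hmd).compLeft (Fin g)

/-- The surjection `ν_{n,m} : Z(n) → Z(m)`, `x ↦ d·x`. -/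
def nuMap (g m n d : ℕ) (hmd : n = m * d) : ZGrp g n →+ ZGrp g m :=
  (nuZMod m n d hmd).compLeft (Fin g)

/-- `ν̂_{m,n} : Ẑ(m) → Ẑ(n)`, the dual of `ν_{n,m}`: `ν̂_{m,n}(y)(x) = y(ν_{n,m}(x))`. -/
def nuHat (g m n d : ℕ) (k : Type*) [Field k] (hmd : n = m * d) (y : ZHat g m k) :
    ZHat g n k :=
  y.compAddMonoidHom (nuMap g m n d hmd)

/-- `μ̂_{n,m} : Ẑ(n) → Ẑ(m)`, the dual of `μ_{m,n}` (restriction of characters). -/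
def muHat (g m n d : ℕ) (k : Type*) [Field k] (hmd : n = m * d) (y : ZHat g n k) :
    ZHat g m k :=
  y.compAddMonoidHom (muMap g m n d hmd)

/-- `E_d(m) : G(m) → G(n)`, `(ℓ,x,y) ↦ (ℓ^d, μ_{m,n}(x), ν̂_{m,n}(y))`. -/
def Emap (g m n d : ℕ) (k : Type*) [Field k] (hmd : n = m * d) (h : Heis g m k) :
    Heis g n k :=
  ⟨h.t ^ d, muMap g m n d hmd h.x, nuHat g m n d k hmd h.y⟩

/-- `H_d(n) : G(n) → G(m)`, `(ℓ,x,y) ↦ (ℓ^d, ν_{n,m}(x), μ̂_{n,m}(y))`. -/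
def Hmap (g m n d : ℕ) (k : Type*) [Field k] (hmd : n = m * d) (h : Heis g n k) :
    Heis g m k :=
  ⟨h.t ^ d, nuMap g m n d hmd h.x, muHat g m n d k hmd h.y⟩

/-- `D_d(N) : G(N) → G(N)`, `(ℓ,x,y) ↦ (ℓ^{d²}, d·x, d·y)`. -/
def Dmap (g N d : ℕ) (k : Type*) [Field k] (h : Heis g N k) : Heis g N k :=
  ⟨h.t ^ d ^ 2, d • h.x, d • h.y⟩

/-!
Each of `E`, `H`, `D` has the shape `(ℓ, x, y) ↦ (ℓ ^ e, f x, φ y)` with `f`, `φ` additive, and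
such a map is multiplicative as soon as `φ(y)(f x) = y(x) ^ e`: the twist `y₂(x₁)` in the product
is then carried to its `e`-th power. For `E` and `H` this identity, and both composition formulas,
come down to `ν ∘ μ = d·` and `μ ∘ ν = d·`; for `D` it is `(d·y)(d·x) = y(x) ^ d²`.
-/

variable {m d : ℕ}

def dualHom {A B M : Type*} [AddMonoid A] [AddMonoid B] [CommMonoid M] (f : A →+ B) :
    AddChar B M →+ AddChar A M where
  toFun ψ := ψ.compAddMonoidHom f
  map_zero' := rfl
  map_add' _ _ := rfl

namespace Heis

def map (e : ℕ) (f : ZGrp g m →+ ZGrp g n) (φ : ZHat g m k →+ ZHat g n k) (a : Heis g m k) :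
    Heis g n k :=
  ⟨a.t ^ e, f a.x, φ a.y⟩

theorem map_mul {e : ℕ} {f : ZGrp g m →+ ZGrp g n} {φ : ZHat g m k →+ ZHat g n k}
    (hfφ : ∀ y x, φ y (f x) = y x ^ e) (a b : Heis g m k) :
    map e f φ (a * b) = map e f φ a * map e f φ b := by
  ext1
  · simp only [map, mul_t, hfφ, mul_pow]
  · exact map_add f a.x b.x
  · exact map_add φ a.y b.y

end Heis

theorem muZMod_intCast (hmd : n = m * d) (a : ℤ) :
    muZMod m n d hmd (a : ZMod m) = a * d := by
  rw [muZMod, ZMod.lift_coe]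
  simp [zsmul_eq_mul]

theorem nuZMod_intCast (hmd : n = m * d) (a : ℤ) :
    nuZMod m n d hmd (a : ZMod n) = a := by
  simp [nuZMod]

theorem nuZMod_muZMod (hmd : n = m * d) (x : ZMod m) :
    nuZMod m n d hmd (muZMod m n d hmd x) = d • x := by
  obtain ⟨a, rfl⟩ := ZMod.intCast_surjective x
  rw [muZMod_intCast, ← Int.cast_natCast, ← Int.cast_mul, nuZMod_intCast]
  simp [nsmul_eq_mul, mul_comm]

theorem muZMod_nuZMod (hmd : n = m * d) (x : ZMod n) :
    muZMod m n d hmd (nuZMod m n d hmd x) = d • x := by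
  obtain ⟨a, rfl⟩ := ZMod.intCast_surjective x
  rw [nuZMod_intCast, muZMod_intCast, nsmul_eq_mul, mul_comm]

theorem nuMap_muMap (hmd : n = m * d) (x : ZGrp g m) :
    nuMap g m n d hmd (muMap g m n d hmd x) = d • x :=
  funext fun i => nuZMod_muZMod hmd (x i)

theorem muMap_nuMap (hmd : n = m * d) (x : ZGrp g n) :
    muMap g m n d hmd (nuMap g m n d hmd x) = d • x :=
  funext fun i => muZMod_nuZMod hmd (x i)

theorem nuHat_apply_muMap (hmd : n = m * d) (y : ZHat g m k) (x : ZGrp g m) :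
    nuHat g m n d k hmd y (muMap g m n d hmd x) = y x ^ d := by
  rw [nuHat, AddChar.compAddMonoidHom_apply, nuMap_muMap, AddChar.map_nsmul_eq_pow]

theorem muHat_apply_nuMap (hmd : n = m * d) (y : ZHat g n k) (x : ZGrp g n) :
    muHat g m n d k hmd y (nuMap g m n d hmd x) = y x ^ d := by
  rw [muHat, AddChar.compAddMonoidHom_apply, muMap_nuMap, AddChar.map_nsmul_eq_pow]

theorem Emap_eq_map (hmd : n = m * d) :
    Emap g m n d k hmd = Heis.map d (muMap g m n d hmd) (dualHom (nuMap g m n d hmd)) :=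
  rfl

theorem Hmap_eq_map (hmd : n = m * d) :
    Hmap g m n d k hmd = Heis.map d (nuMap g m n d hmd) (dualHom (muMap g m n d hmd)) :=
  rfl

theorem Dmap_eq_map :
    Dmap g n d k =
      Heis.map (d ^ 2) (DistribSMul.toAddMonoidHom _ d) (DistribSMul.toAddMonoidHom _ d) :=
  rfl

theorem Emap_mul (hmd : n = m * d) (a b : Heis g m k) :
    Emap g m n d k hmd (a * b) = Emap g m n d k hmd a * Emap g m n d k hmd b := by
  rw [Emap_eq_map]
  exact Heis.map_mul (nuHat_apply_muMap hmd) a b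

theorem Hmap_mul (hmd : n = m * d) (a b : Heis g n k) :
    Hmap g m n d k hmd (a * b) = Hmap g m n d k hmd a * Hmap g m n d k hmd b := by
  rw [Hmap_eq_map]
  exact Heis.map_mul (muHat_apply_nuMap hmd) a b

theorem Dmap_mul (a b : Heis g n k) :
    Dmap g n d k (a * b) = Dmap g n d k a * Dmap g n d k b := by
  rw [Dmap_eq_map]
  refine Heis.map_mul (fun y x => ?_) a b
  rw [DistribSMul.toAddMonoidHom_apply, DistribSMul.toAddMonoidHom_apply, AddChar.nsmul_apply,
    AddChar.map_nsmul_eq_pow, ← pow_mul, sq]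

theorem muHat_nuHat (hmd : n = m * d) (y : ZHat g m k) :
    muHat g m n d k hmd (nuHat g m n d k hmd y) = d • y :=
  DFunLike.ext _ _ (nuHat_apply_muMap hmd y)

theorem nuHat_muHat (hmd : n = m * d) (y : ZHat g n k) :
    nuHat g m n d k hmd (muHat g m n d k hmd y) = d • y :=
  DFunLike.ext _ _ (muHat_apply_nuMap hmd y)

theorem Hmap_Emap (hmd : n = m * d) (a : Heis g m k) :
    Hmap g m n d k hmd (Emap g m n d k hmd a) = Dmap g m d k a :=
  Heis.ext (by rw [Hmap, Emap, Dmap, ← pow_mul, sq]) (nuMap_muMap hmd a.x) (muHat_nuHat hmd a.y)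

theorem Emap_Hmap (hmd : n = m * d) (a : Heis g n k) :
    Emap g m n d k hmd (Hmap g m n d k hmd a) = Dmap g n d k a :=
  Heis.ext (by rw [Hmap, Emap, Dmap, ← pow_mul, sq]) (muMap_nuMap hmd a.x) (nuHat_muHat hmd a.y)

theorem Emap_Hmap_Dmap_hom_and_comp_general (g m n d : ℕ) (hmd : n = m * d)
    (k : Type*) [Field k] :
    (∀ a b : Heis g m k,
      Emap g m n d k hmd (a * b) = Emap g m n d k hmd a * Emap g m n d k hmd b) ∧
    (∀ a b : Heis g n k,
      Hmap g m n d k hmd (a * b) = Hmap g m n d k hmd a * Hmap g m n d k hmd b) ∧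
    (∀ a b : Heis g m k,
      Dmap g m d k (a * b) = Dmap g m d k a * Dmap g m d k b) ∧
    (∀ a : Heis g m k, Hmap g m n d k hmd (Emap g m n d k hmd a) = Dmap g m d k a) ∧
    (∀ a : Heis g n k, Emap g m n d k hmd (Hmap g m n d k hmd a) = Dmap g n d k a) :=
  ⟨Emap_mul hmd, Hmap_mul hmd, Dmap_mul, Hmap_Emap hmd, Emap_Hmap hmd⟩

/-- `E_d(m)`, `H_d(n)` and `D_d(m)` are group homomorphisms of
Heisenberg groups, and `H_d(n) ∘ E_d(m) = D_d(m)`, `E_d(m) ∘ H_d(n) = D_d(n)`. -/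
theorem Emap_Hmap_Dmap_hom_and_comp (g m n d : ℕ) (hg : 1 ≤ g)
    (hm : 1 < m) (hn : 1 < n) (hd : 1 < d) (hmd : n = m * d)
    (k : Type*) [Field k] :
    (∀ a b : Heis g m k,
      Emap g m n d k hmd (a * b) = Emap g m n d k hmd a * Emap g m n d k hmd b) ∧
    (∀ a b : Heis g n k,
      Hmap g m n d k hmd (a * b) = Hmap g m n d k hmd a * Hmap g m n d k hmd b) ∧
    (∀ a b : Heis g m k,
      Dmap g m d k (a * b) = Dmap g m d k a * Dmap g m d k b) ∧
    (∀ a : Heis g m k, Hmap g m n d k hmd (Emap g m n d k hmd a) = Dmap g m d k a) ∧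
    (∀ a : Heis g n k, Emap g m n d k hmd (Hmap g m n d k hmd a) = Dmap g n d k a) :=
  Emap_Hmap_Dmap_hom_and_comp_general g m n d hmd k

end ThetaPaper
end

section
/- For every integer d ≥ 1 and every element h of the level-m Heisenberg group G(m), one has D_d(m)(h) = h^{(d²+d)/2} · D₋₁(h^{(d²−d)/2}), where D_d(m)(ℓ,x,y) = (ℓ^{d²}, d·x, d·y). -/
namespace ThetaPaper

variable {g n : ℕ} {k : Type*} [Field k]

lemma two_choose : ∀ n : ℕ, 2 * n.choose 2 + n = n * n
  | 0 => by simp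
  | n+1 => by
    have := two_choose n
    rw [Nat.choose_succ_succ, Nat.choose_one_right]
    nlinarith [this]

lemma choose_aux_s11 (b d : ℕ) (hr : (b + d) + b = d * d) :
    (b + d).choose 2 + b.choose 2 = (b + d) * b := by
  nlinarith [two_choose (b + d), two_choose b, hr]

lemma heis_pow_eq (h : Heis g n k) (a : ℕ) :
    h ^ a = ⟨h.t ^ a * (h.y h.x) ^ (a.choose 2), a • h.x, a • h.y⟩ := by
  induction a with
  | zero => ext <;> simp
  | succ a ih =>
    rw [pow_succ, ih]
    refine Heis.ext ?_ ?_ ?_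
    · show h.t ^ a * h.y h.x ^ a.choose 2 * h.t * h.y (a • h.x) = _
      rw [AddChar.map_nsmul_eq_pow, Nat.choose_succ_succ, Nat.choose_one_right,
        pow_succ, pow_add]
      simp [mul_comm, mul_left_comm, mul_assoc]
    · exact (succ_nsmul h.x a).symm
    · exact (succ_nsmul h.y a).symm

/-- `D_d(m)(h) = h^{(d²+d)/2} · D₋₁(h^{(d²−d)/2})` for every `h` in
the level-`m` Heisenberg group and every integer `d ≥ 1`. -/
theorem Dmap_eq_pow_mul_Dneg_pow (g m : ℕ) (hg : 1 ≤ g) (hm : 1 ≤ m)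
    (k : Type*) [Field k] (d : ℕ) (hd : 1 ≤ d) (h : Heis g m k) :
    (⟨h.t ^ d ^ 2, d • h.x, d • h.y⟩ : Heis g m k) =
      h ^ ((d ^ 2 + d) / 2) * Heis.Dneg (h ^ ((d ^ 2 - d) / 2)) := by
  obtain ⟨e, rfl⟩ : ∃ e, d = e + 1 := ⟨d - 1, by omega⟩
  set d := e + 1 with hdef
  set a := (d ^ 2 + d) / 2 with haeq
  set b := (d ^ 2 - d) / 2 with hbeq
  have hsq : d ^ 2 = e * e + 2 * e + 1 := by rw [hdef]; ring
  obtain ⟨c, hc⟩ : Even (e * e + e) := by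
    have : e * e + e = e * (e + 1) := by ring
    rw [this]; exact Nat.even_mul_succ_self e
  have hab : a = b + d := by omega
  have habd : (b + d) + b = d * d := by
    have : d * d = d ^ 2 := (sq d).symm
    omega
  have hch : a.choose 2 + b.choose 2 = a * b := by
    rw [hab]; exact choose_aux_s11 b d habd
  have hba : b ≤ a := by omega
  have hsub : a - b = d := by omega
  rw [heis_pow_eq, heis_pow_eq]
  have hneg : ((-(b • h.y)) (a • h.x)) = (h.y h.x ^ (a * b))⁻¹ := by
    rw [AddChar.neg_apply, AddChar.nsmul_apply, AddChar.map_neg_eq_inv,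
      AddChar.map_nsmul_eq_pow, inv_pow, ← pow_mul]
  refine Heis.ext ?_ ?_ ?_
  · show h.t ^ d ^ 2 =
      h.t ^ a * h.y h.x ^ a.choose 2 * (h.t ^ b * h.y h.x ^ b.choose 2) *
        ((-(b • h.y)) (a • h.x))
    rw [hneg, eq_mul_inv_iff_mul_eq, ← hch, pow_add]
    have hda : d ^ 2 = a + b := by omega
    rw [hda, pow_add, mul_mul_mul_comm]
  · show d • h.x = a • h.x + -(b • h.x)
    rw [← sub_nsmul h.x hba, hsub]
  · show d • h.y = a • h.y + -(b • h.y)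
    rw [← sub_nsmul h.y hba, hsub]

end ThetaPaper
end

section
/- Let A be an abelian group and k a field, and write Â := Hom(A, kˣ). If (x₁,x₂,x₃,x₄; x₅,x₆,x₇,x₈) ∈ A^8 is in Riemann position and (y₁,y₂,y₃,y₄; y₅,y₆,y₇,y₈) ∈ Â^8 is in Riemann position (in the group Â), then ∏_{j=1}^{4} y_j(x_j) = ∏_{j=5}^{8} y_j(x_j). -/
/-- Eight elements `(x₁,…,x₄; x₅,…,x₈)` of an abelian group are in *Riemann
position* if there is `z` with `−x₁+x₂+x₃+x₄ = 2z` and `x₅ = x₁+z`, `x₆ = x₂−z`,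
`x₇ = x₃−z`, `x₈ = x₄−z`. -/
def RiemannPos {G : Type*} [AddCommGroup G] (x : Fin 8 → G) : Prop :=
  ∃ z : G, -x 0 + x 1 + x 2 + x 3 = 2 • z ∧
    x 4 = x 0 + z ∧ x 5 = x 1 - z ∧ x 6 = x 2 - z ∧ x 7 = x 3 - z

/-- if `(x₁,…,x₈) ∈ A⁸` is in Riemann position and
`(y₁,…,y₈) ∈ Â⁸` is in Riemann position in the character group
`Â = Hom(A, kˣ)`, then `∏_{j=1}^{4} y_j(x_j) = ∏_{j=5}^{8} y_j(x_j)`. -/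
theorem riemann_position_pairing (A : Type*) [AddCommGroup A] (k : Type*) [Field k]
    (x : Fin 8 → A) (y : Fin 8 → AddChar A kˣ)
    (hx : RiemannPos x) (hy : RiemannPos y) :
    y 0 (x 0) * y 1 (x 1) * y 2 (x 2) * y 3 (x 3) =
      y 4 (x 4) * y 5 (x 5) * y 6 (x 6) * y 7 (x 7) := by
  obtain ⟨z, hz, h4, h5, h6, h7⟩ := hx
  obtain ⟨w, gw, g4, g5, g6, g7⟩ := hy
  rw [two_nsmul] at hz gw
  have hz' := congrArg w hz
  simp only [AddChar.map_add_eq_mul, AddChar.map_neg_eq_inv] at hz'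
  have gw' := congrArg (fun ψ : AddChar A kˣ => ψ z) gw
  simp only [AddChar.add_apply, AddChar.neg_apply, AddChar.map_neg_eq_inv] at gw'
  have hA : w (x 0) * (w (x 1))⁻¹ * (w (x 2))⁻¹ * (w (x 3))⁻¹ = (w z * w z)⁻¹ := by
    rw [← hz']
    simp [mul_inv_rev, mul_comm, mul_left_comm, mul_assoc]
  have hB : (y 0) z * ((y 1) z)⁻¹ * ((y 2) z)⁻¹ * ((y 3) z)⁻¹ = (w z * w z)⁻¹ := by
    rw [← gw']
    simp [mul_inv_rev, mul_comm, mul_left_comm, mul_assoc]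
  have key : (w (x 0) * (w (x 1))⁻¹ * (w (x 2))⁻¹ * (w (x 3))⁻¹) *
      ((y 0) z * ((y 1) z)⁻¹ * ((y 2) z)⁻¹ * ((y 3) z)⁻¹) * (w z * w z * w z * w z) = 1 := by
    rw [hA, hB]
    simp [mul_inv_rev, mul_comm, mul_left_comm, mul_assoc]
  rw [h4, h5, h6, h7, g4, g5, g6, g7]
  simp only [AddChar.add_apply, AddChar.sub_apply, AddChar.neg_apply,
    AddChar.map_add_eq_mul, AddChar.map_sub_eq_div, AddChar.map_neg_eq_inv,
    div_eq_mul_inv, mul_inv_rev, inv_inv]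
  calc y 0 (x 0) * y 1 (x 1) * y 2 (x 2) * y 3 (x 3)
      = (y 0 (x 0) * y 1 (x 1) * y 2 (x 2) * y 3 (x 3)) *
        ((w (x 0) * (w (x 1))⁻¹ * (w (x 2))⁻¹ * (w (x 3))⁻¹) *
        ((y 0) z * ((y 1) z)⁻¹ * ((y 2) z)⁻¹ * ((y 3) z)⁻¹) * (w z * w z * w z * w z)) := by
        rw [key, mul_one]
    _ = _ := by
        refine Additive.ofMul.injective ?_
        simp only [ofMul_mul, ofMul_inv]
        abel
end

section
/- Let m,n,d > 1 with n = md and m even, and assume k contains a primitive n-th root of unity with char k not dividing n. Let c = (c₁,c₂) ∈ K(n) with 2c = 0. Then the automorphism Φ(c) of G(n) is compatible with G(m) if and only if c₁ = 0 and, in addition, either d is even or c₂ = 0. In particular, the intersection of Φ(K(n)[2]) with the group of automorphisms compatible with G(m) is Φ({0} × Ẑ(n)[2]) ≅ (ℤ/2ℤ)^g when d is even, and is trivial when d is odd. -/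
namespace ThetaPaper

variable {g n : ℕ} {k : Type*} [Field k]

/-- The automorphism `Φ(c) : (α,x,y) ↦ (α·e_n(c,(x,y)), x, y)` of `G(n)`. -/
def Phic (c : KGrp g n k) (h : Heis g n k) : Heis g n k :=
  ⟨h.t * en c h.toK, h.x, h.y⟩

/-- The subgroup `{1} × {0} × ν̂_{d,n}(Ẑ(d))` of `G(n)`, where `ν̂_{d,n}(Ẑ(d))` is
identified with the `d`-torsion `Ẑ(n)[d]`. -/
def HdSet (g n : ℕ) (k : Type*) [Field k] (d : ℕ) : Set (Heis g n k) :=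
  {h | h.t = 1 ∧ h.x = 0 ∧ d • h.y = 0}

/-- A map `f : G(n) → G(n)` is *compatible with `G(m)`* (where `n = md`,
identifying `μ_{m,n}(Z(m))` with `d·Z(n)` and `ν̂_{d,n}(Ẑ(d))` with `Ẑ(n)[d]`). -/
def CompatGm (g n : ℕ) (k : Type*) [Field k] (d : ℕ)
    (f : Heis g n k → Heis g n k) : Prop :=
  f '' HdSet g n k d = HdSet g n k d ∧
  (∀ h : Heis g n k, h.t = 1 → h.x = 0 → f h * h⁻¹ ∈ HdSet g n k d) ∧
  (∀ h : Heis g n k, h.t = 1 → (∃ x' : ZGrp g n, h.x = d • x') → h.y = 0 →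
    f h * h⁻¹ ∈ HdSet g n k d)

/-!
Since `Φ(c)(h)·h⁻¹ = (e_n(c, π h), 0, 0)`, conditions (2) and (3) say that `e_n(c, ·)` is trivial
on `{0} × Ẑ(n)` and on `d·Z(n) × {0}`, where it is `ψ ↦ ψ(c₁)⁻¹` and `x ↦ c₂(x)`. The first
forces `c₁ = 0`, because with a primitive `n`-th root of unity the characters of `Z(n)` separate
points; then `Φ(c)` fixes `{0} × Ẑ(n)` pointwise, which gives (1). For `2c = 0` the character
`c₂` has order dividing `2`, so `c₂(d·x) = c₂(x)^d` is trivial for all `x` iff `d` is even or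
`c₂ = 0`.
-/

theorem _root_.AddChar.eq_zero_of_forall_apply_eq_one {M ι : Type*} [CommMonoid M] [NeZero n]
    {ζ : M} (hζ : IsPrimitiveRoot ζ n) {x : ι → ZMod n}
    (hx : ∀ ψ : AddChar (ι → ZMod n) Mˣ, ψ x = 1) : x = 0 := by
  by_contra hne
  obtain ⟨i, hi⟩ := Function.ne_iff.mp hne
  obtain ⟨φ, hφ⟩ := ZMod.exists_monoidHom_apply_ne_one ⟨ζ, hζ⟩ hi
  exact hφ (hx ((AddChar.toMonoidHomEquiv.symm φ).compAddMonoidHom (Pi.evalAddMonoidHom _ i)))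

theorem _root_.AddChar.forall_apply_nsmul_eq_one_iff {A M : Type*} [AddMonoid A] [CommMonoid M]
    {y : AddChar A M} (hy : y + y = 0) (d : ℕ) :
    (∀ x, y (d • x) = 1) ↔ Even d ∨ y = 0 := by
  have hsq (x : A) : y x ^ 2 = 1 := by simpa [sq] using DFunLike.congr_fun hy x
  constructor
  · intro h
    rcases Nat.even_or_odd d with hd | ⟨j, rfl⟩
    · exact Or.inl hd
    · refine Or.inr (DFunLike.ext _ _ fun x => ?_)
      simpa [AddChar.map_nsmul_eq_pow, pow_succ, pow_mul, hsq] using h x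
  · rintro (⟨j, rfl⟩ | rfl) x
    · rw [AddChar.map_nsmul_eq_pow, ← two_mul, pow_mul, hsq, one_pow]
    · rfl

theorem Phic_mul_inv (c : KGrp g n k) (h : Heis g n k) :
    Phic c h * h⁻¹ = ⟨en c h.toK, 0, 0⟩ := by
  ext <;> simp [Phic, AddChar.map_neg_eq_inv]
  field_simp

theorem Phic_mul_inv_mem_HdSet_iff {d : ℕ} (c : KGrp g n k) (h : Heis g n k) :
    Phic c h * h⁻¹ ∈ HdSet g n k d ↔ en c h.toK = 1 := by
  simp [Phic_mul_inv, HdSet, AddChar.ext_iff]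

theorem Phic_apply_of_x_eq_zero {c : KGrp g n k} (hc : c.1 = 0) {h : Heis g n k}
    (hx : h.x = 0) : Phic c h = h := by
  ext <;> simp [Phic, en, Heis.toK, hc, hx]

theorem compatGm_Phic_iff [NeZero n] {ζ : k} (hζ : IsPrimitiveRoot ζ n) (d : ℕ)
    (c : KGrp g n k) :
    CompatGm g n k d (Phic c) ↔ c.1 = 0 ∧ ∀ x, c.2 (d • x) = 1 := by
  have cond2 : (∀ h : Heis g n k, h.t = 1 → h.x = 0 → Phic c h * h⁻¹ ∈ HdSet g n k d) ↔
      c.1 = 0 := by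
    refine ⟨fun h => AddChar.eq_zero_of_forall_apply_eq_one hζ fun ψ => ?_, fun hc h _ hx => ?_⟩
    · simpa [Phic_mul_inv_mem_HdSet_iff, en, Heis.toK] using h ⟨1, 0, ψ⟩ rfl rfl
    · simp [Phic_mul_inv_mem_HdSet_iff, en, Heis.toK, hc, hx]
  have cond3 : (∀ h : Heis g n k, h.t = 1 → (∃ x', h.x = d • x') → h.y = 0 →
      Phic c h * h⁻¹ ∈ HdSet g n k d) ↔ ∀ x, c.2 (d • x) = 1 := by
    refine ⟨fun h x => ?_, ?_⟩
    · simpa [Phic_mul_inv_mem_HdSet_iff, en, Heis.toK] using h ⟨1, d • x, 0⟩ rfl ⟨x, rfl⟩ rfl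
    · rintro h ⟨t, x, y⟩ - ⟨x', rfl⟩ rfl
      simpa [Phic_mul_inv_mem_HdSet_iff, en, Heis.toK] using h x'
  rw [CompatGm, cond2, cond3]
  exact ⟨fun ⟨_, hc, hd⟩ => ⟨hc, hd⟩, fun ⟨hc, hd⟩ =>
    ⟨Set.EqOn.image_eq_self fun h hh => Phic_apply_of_x_eq_zero hc hh.2.1, hc, hd⟩⟩

theorem Phic_compatible_iff_general (g n d : ℕ) (hn : 1 < n)
    (k : Type*) [Field k] (ζ : k) (hζ : IsPrimitiveRoot ζ n) :
    (∀ c : KGrp g n k, c + c = 0 →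
      (CompatGm g n k d (Phic c) ↔ (c.1 = 0 ∧ (Even d ∨ c.2 = 0)))) ∧
    (Even d →
      {c : KGrp g n k | c + c = 0 ∧ CompatGm g n k d (Phic c)} =
        {c : KGrp g n k | c + c = 0 ∧ c.1 = 0}) ∧
    (¬ Even d →
      {c : KGrp g n k | c + c = 0 ∧ CompatGm g n k d (Phic c)} = {0}) := by
  have : NeZero n := ⟨by omega⟩
  have key (c : KGrp g n k) (hc : c + c = 0) :
      CompatGm g n k d (Phic c) ↔ c.1 = 0 ∧ (Even d ∨ c.2 = 0) := by
    rw [compatGm_Phic_iff hζ, AddChar.forall_apply_nsmul_eq_one_iff (congrArg Prod.snd hc)]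
  refine ⟨key, fun hd => ?_, fun hd => ?_⟩
  · ext c
    exact and_congr_right fun hc => (key c hc).trans (by simp [hd])
  · ext c
    refine ⟨fun ⟨hc, hcompat⟩ => ?_, ?_⟩
    · obtain ⟨hc1, hc2⟩ := (key c hc).1 hcompat
      exact Prod.ext hc1 (hc2.resolve_left hd)
    · rintro rfl
      have h0 : (0 : KGrp g n k) + 0 = 0 := add_zero (0 : KGrp g n k)
      exact ⟨h0, (key 0 h0).2 ⟨rfl, Or.inr rfl⟩⟩

/-- for `2`-torsion `c = (c₁,c₂) ∈ K(n)`, the automorphism `Φ(c)` is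
compatible with `G(m)` iff `c₁ = 0` and (either `d` is even or `c₂ = 0`). In
particular, among the `Φ(c)` with `2c = 0`, the compatible ones are exactly those
with `c ∈ {0} × Ẑ(n)[2]` when `d` is even, and only `Φ(0)` when `d` is odd. -/
theorem Phic_compatible_iff (g m n d : ℕ) (hg : 1 ≤ g)
    (hm : 1 < m) (hn : 1 < n) (hd : 1 < d) (hmd : n = m * d) (hmeven : Even m)
    (k : Type*) [Field k] (ζ : k) (hζ : IsPrimitiveRoot ζ n) (hchar : (n : k) ≠ 0) :
    (∀ c : KGrp g n k, c + c = 0 →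
      (CompatGm g n k d (Phic c) ↔ (c.1 = 0 ∧ (Even d ∨ c.2 = 0)))) ∧
    (Even d →
      {c : KGrp g n k | c + c = 0 ∧ CompatGm g n k d (Phic c)} =
        {c : KGrp g n k | c + c = 0 ∧ c.1 = 0}) ∧
    (¬ Even d →
      {c : KGrp g n k | c + c = 0 ∧ CompatGm g n k d (Phic c)} = {0}) :=
  Phic_compatible_iff_general g n d hn k ζ hζ

end ThetaPaper
end
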